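/- arXiv:2307.02478 — 4 statements merged into one kernel-verified Lean document; each statement's English description precedes it below -/
import Mathlib

section
/- Let d ≥ 1, let r : ℝ → ℝ^d be a C^{d+1} curve with r(0) = 0, and let V_1, …, V_d : ℝ → ℝ^d be C^d maps such that (V_1(s), …, V_d(s)) is an orthonormal family for each s near 0, V_1(s) = r'(s), and the generalized Frenet–Serret equations hold: V_n'(s) = −α_n(s)·V_{n−1}(s) + α_{n+1}(s)·V_{n+1}(s) for 1 ≤ n ≤ d, where α_2, …, α_d : ℝ → ℝ are C^{d} functions, and by convention the term with V_0 is absent for n = 1 and the term with α_{d+1} is absent for n = d. Then for each n with 1 ≤ n ≤ d, as s → 0: ⟨r(s), V_n(0)⟩ = ( ∏_{i=2}^{n} α_i(0) ) · sⁿ / n! + O(s^{n+1}) (with the empty product equal to 1 when n = 1). -/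
open Filter Asymptotics Topology Finset
open scoped RealInnerProductSpace

lemma integ_step {u : ℝ → ℝ} (hu : Differentiable ℝ u) (hu0 : u 0 = 0) {k : ℕ}
    (hder : (deriv u) =O[𝓝 (0:ℝ)] fun s => s ^ k) :
    u =O[𝓝 (0:ℝ)] fun s => s ^ (k + 1) := by
  rw [isBigO_iff] at hder ⊢
  obtain ⟨C, hC⟩ := hder
  rw [Metric.eventually_nhds_iff] at hC
  obtain ⟨δ, hδ, hCb⟩ := hC
  refine ⟨|C|, Metric.eventually_nhds_iff.2 ⟨δ, hδ, fun {s} hs => ?_⟩⟩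
  have hseg : ∀ t ∈ segment ℝ (0:ℝ) s, ‖deriv u t‖ ≤ |C| * |s| ^ k := by
    intro t ht
    obtain ⟨a, b, ha, hb, hab, rfl⟩ := ht
    have htle : |a • (0:ℝ) + b • s| ≤ |s| := by
      simp only [smul_eq_mul, mul_zero, zero_add]
      calc |b * s| = b * |s| := by rw [abs_mul, abs_of_nonneg hb]
      _ ≤ 1 * |s| := by gcongr; linarith
      _ = |s| := one_mul _
    have hdist : dist (a • (0:ℝ) + b • s) 0 < δ := by
      rw [Real.dist_eq, sub_zero]
      exact lt_of_le_of_lt htle (by simpa [Real.dist_eq] using hs)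
    calc ‖deriv u (a • (0:ℝ) + b • s)‖ ≤ C * ‖(a • (0:ℝ) + b • s) ^ k‖ := hCb hdist
      _ ≤ |C| * |s| ^ k := by
          rw [Real.norm_eq_abs, abs_pow]
          calc C * |a • (0:ℝ) + b • s| ^ k
              ≤ |C| * |a • (0:ℝ) + b • s| ^ k :=
                mul_le_mul_of_nonneg_right (le_abs_self C) (pow_nonneg (abs_nonneg _) k)
            _ ≤ |C| * |s| ^ k :=
                mul_le_mul_of_nonneg_left (pow_le_pow_left₀ (abs_nonneg _) htle k) (abs_nonneg C)
  have h0 : (0:ℝ) ∈ segment ℝ (0:ℝ) s := left_mem_segment ℝ 0 s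
  have hsm : s ∈ segment ℝ (0:ℝ) s := right_mem_segment ℝ 0 s
  have := (convex_segment (0:ℝ) s).norm_image_sub_le_of_norm_hasDerivWithin_le
    (fun x _ => (hu x).hasDerivAt.hasDerivWithinAt) hseg h0 hsm
  rw [hu0, sub_zero, sub_zero] at this
  calc ‖u s‖ ≤ |C| * |s| ^ k * ‖s‖ := this
    _ = |C| * ‖s ^ (k+1)‖ := by
        rw [Real.norm_eq_abs, Real.norm_eq_abs, abs_pow, pow_succ]; ring

/-- for a `C^{d+1}` curve `r` in `ℝ^d` with `r(0) = 0` equipped with a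
generalized Frenet–Serret frame `V₁, …, V_d` (orthonormal near `0`, with `V₁ = r'` and
`Vₙ' = −αₙ V_{n−1} + α_{n+1} V_{n+1}`, where by convention `α₁ ≡ 0` encodes the absence
of the `V₀`-term for `n = 1` and `α_{d+1} ≡ 0` the absence of the `V_{d+1}`-term for
`n = d`), the coordinates of the curve satisfy
`⟨r(s), Vₙ(0)⟩ = (∏_{i=2}^{n} αᵢ(0)) sⁿ/n! + O(s^{n+1})` as `s → 0`. -/
theorem stmt_10 (d : ℕ) (hd : 1 ≤ d) (r : ℝ → EuclideanSpace ℝ (Fin d))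
    (hr : ContDiff ℝ (d + 1) r) (hr0 : r 0 = 0)
    (V : ℕ → ℝ → EuclideanSpace ℝ (Fin d)) (α : ℕ → ℝ → ℝ)
    (hVsmooth : ∀ n, 1 ≤ n → n ≤ d → ContDiff ℝ d (V n))
    (hαsmooth : ∀ n, 2 ≤ n → n ≤ d → ContDiff ℝ d (α n))
    (horth : ∀ᶠ s in 𝓝 (0 : ℝ), ∀ m n, 1 ≤ m → m ≤ d → 1 ≤ n → n ≤ d →
      ⟪V m s, V n s⟫ = if m = n then 1 else 0)
    (hV1 : ∀ᶠ s in 𝓝 (0 : ℝ), V 1 s = deriv r s)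
    (hα1 : ∀ s, α 1 s = 0)
    (hαtop : ∀ s, α (d + 1) s = 0)
    (hFrenet : ∀ᶠ s in 𝓝 (0 : ℝ), ∀ n, 1 ≤ n → n ≤ d →
      deriv (V n) s = -(α n s) • V (n - 1) s + α (n + 1) s • V (n + 1) s) :
    ∀ n, 1 ≤ n → n ≤ d →
      (fun s : ℝ => ⟪r s, V n 0⟫ - (∏ i ∈ Finset.Icc 2 n, α i 0) * s ^ n / n.factorial)
        =O[𝓝 (0 : ℝ)] fun s => s ^ (n + 1) := by
  intro n hn1 hnd
  have hd1 : (1 : WithTop ℕ∞) ≤ ((d : ℕ) : WithTop ℕ∞) := by exact_mod_cast hd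
  have hVdiff : ∀ m, 1 ≤ m → m ≤ d → Differentiable ℝ (V m) := fun m h1 h2 =>
    (hVsmooth m h1 h2).differentiable (by exact_mod_cast (show d ≠ 0 by omega))
  set g : ℕ → ℝ → ℝ := fun m s => ⟪V m s, V n 0⟫ with hgdef
  have hgdiff : ∀ m, 1 ≤ m → m ≤ d → Differentiable ℝ (g m) := by
    intro m h1 h2 s
    exact ((hVdiff m h1 h2 s).hasDerivAt.inner ℝ (hasDerivAt_const s (V n 0))).differentiableAt
  have hgO1 : ∀ m, 1 ≤ m → m ≤ d → (g m) =O[𝓝 (0:ℝ)] fun _ => (1:ℝ) := fun m h1 h2 =>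
    ((hgdiff m h1 h2).continuous.continuousAt).isBigO_one ℝ
  have hαO1 : ∀ j, 2 ≤ j → j ≤ d → (α j) =O[𝓝 (0:ℝ)] fun _ => (1:ℝ) := fun j h1 h2 =>
    ((hαsmooth j h1 h2).continuous.continuousAt).isBigO_one ℝ
  have hg0 : ∀ m, 1 ≤ m → m ≤ d → g m 0 = if m = n then 1 else 0 := fun m h1 h2 =>
    horth.self_of_nhds m n h1 h2 hn1 hnd
  have hgFrenet : ∀ m, 1 ≤ m → m ≤ d →
      deriv (g m) =ᶠ[𝓝 (0:ℝ)] fun s => -(α m s) * g (m-1) s + α (m+1) s * g (m+1) s := by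
    intro m h1 h2
    filter_upwards [hFrenet] with s hs
    have hD : HasDerivAt (g m) (⟪V m s, (0 : EuclideanSpace ℝ (Fin d))⟫
        + ⟪deriv (V m) s, V n 0⟫) s :=
      (hVdiff m h1 h2 s).hasDerivAt.inner ℝ (hasDerivAt_const s (V n 0))
    rw [hD.deriv, hs m h1 h2, inner_add_left, real_inner_smul_left, real_inner_smul_left,
      inner_zero_right]
    simp only [hgdef]
    ring
  have hmulO : ∀ (f h : ℝ → ℝ) (k : ℕ), f =O[𝓝 (0:ℝ)] (fun _ => (1:ℝ)) →
      h =O[𝓝 (0:ℝ)] (fun s => s ^ k) →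
      (fun s => f s * h s) =O[𝓝 (0:ℝ)] fun s : ℝ => s ^ k := by
    intro f h k hf hh
    simpa using hf.mul hh
  -- derivative bound helper
  have hderivO : ∀ (j k : ℕ), 1 ≤ j → j ≤ d →
      (2 ≤ j → (g (j-1)) =O[𝓝 (0:ℝ)] fun s => s ^ k) →
      (j + 1 ≤ d → (g (j+1)) =O[𝓝 (0:ℝ)] fun s => s ^ k) →
      (deriv (g j)) =O[𝓝 (0:ℝ)] fun s : ℝ => s ^ k := by
    intro j k h1 h2 hm hp
    refine (hgFrenet j h1 h2).trans_isBigO ?_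
    have t1 : (fun s => -(α j s) * g (j-1) s) =O[𝓝 (0:ℝ)] fun s : ℝ => s ^ k := by
      rcases eq_or_lt_of_le h1 with h | h
      · have he : (fun s => -(α j s) * g (j-1) s) = fun _ => (0:ℝ) := by
          funext s; rw [← h, hα1]; ring
        rw [he]; exact isBigO_zero _ _
      · have h2j : 2 ≤ j := h
        exact hmulO _ _ k ((hαO1 j h2j h2).neg_left) (hm h2j)
    have t2 : (fun s => α (j+1) s * g (j+1) s) =O[𝓝 (0:ℝ)] fun s : ℝ => s ^ k := by
      rcases eq_or_lt_of_le h2 with h | h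
      · have he : (fun s => α (j+1) s * g (j+1) s) = fun _ => (0:ℝ) := by
          funext s; rw [h, hαtop]; ring
        rw [he]; exact isBigO_zero _ _
      · have hjd : j + 1 ≤ d := h
        exact hmulO _ _ k (hαO1 (j+1) (by omega) hjd) (hp hjd)
    exact t1.add t2
  -- crude bound
  have crude : ∀ (k : ℕ) (j : ℕ), 1 ≤ j → j ≤ d → (j + k ≤ n ∨ n + k ≤ j) →
      (g j) =O[𝓝 (0:ℝ)] fun s : ℝ => s ^ k := by
    intro k
    induction k with
    | zero =>
      intro j h1 h2 _
      simpa using hgO1 j h1 h2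
    | succ k ih =>
      intro j h1 h2 hjn
      have hjne : j ≠ n := by omega
      apply integ_step (hgdiff j h1 h2) (by rw [hg0 j h1 h2, if_neg hjne])
      exact hderivO j k h1 h2
        (fun h2j => ih (j-1) (by omega) (by omega) (by omega))
        (fun hjd => ih (j+1) (by omega) hjd (by omega))
  -- precise asymptotics, downward induction from n
  have precise : ∀ t : ℕ, t < n →
      (fun s : ℝ => g (n - t) s - (∏ i ∈ Finset.Icc (n - t + 1) n, α i 0) * s ^ t / t.factorial)
        =O[𝓝 (0:ℝ)] fun s => s ^ (t + 1) := by
    intro t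
    induction t with
    | zero =>
      intro _
      have hprod : (∏ i ∈ Finset.Icc (n + 1) n, α i 0) = 1 := by
        rw [Finset.Icc_eq_empty (by omega), Finset.prod_empty]
      have hfe : (fun s : ℝ => g (n - 0) s
          - (∏ i ∈ Finset.Icc (n - 0 + 1) n, α i 0) * s ^ 0 / (Nat.factorial 0 : ℝ))
          = fun s => g n s - 1 := by
        funext s; simp [hprod]
      rw [hfe]
      apply integ_step ((hgdiff n hn1 hnd).sub (differentiable_const _))
      · rw [Pi.sub_apply, sub_eq_zero, hg0 n hn1 hnd, if_pos rfl]
      · have hdd : deriv (fun s => g n s - 1) = deriv (g n) := by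
          funext s; rw [deriv_sub_const]
        simp only [Pi.sub_def]
        rw [hdd]
        exact hderivO n 0 hn1 hnd
          (fun h2 => crude 0 (n-1) (by omega) (by omega) (by omega))
          (fun hpd => crude 0 (n+1) (by omega) hpd (by omega))
    | succ t ih =>
      intro hlt
      have hltn : t < n := by omega
      set m := n - (t + 1) with hm
      have hm1 : 1 ≤ m := by omega
      have hmd : m ≤ d := by omega
      have hmn : m ≠ n := by omega
      have hm1d : m + 1 ≤ d := by omega
      set c' : ℝ := ∏ i ∈ Finset.Icc (m + 2) n, α i 0 with hc'
      have hcp : (∏ i ∈ Finset.Icc (m + 1) n, α i 0) = α (m+1) 0 * c' := by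
        rw [hc', ← Finset.Ico_add_one_right_eq_Icc, ← Finset.Ico_add_one_right_eq_Icc]
        exact Finset.prod_eq_prod_Ico_succ_bot (by omega) _
      have ihm : (fun s : ℝ => g (m+1) s - c' * s ^ t / (t.factorial : ℝ))
          =O[𝓝 (0:ℝ)] fun s => s ^ (t+1) := by
        have h := ih hltn
        rw [show n - t = m + 1 from by omega] at h
        exact h
      have hgm1O : (g (m+1)) =O[𝓝 (0:ℝ)] fun s : ℝ => s ^ t := by
        have h1 : (fun s : ℝ => c' * s ^ t / (t.factorial : ℝ)) =O[𝓝 (0:ℝ)] fun s => s ^ t := by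
          have h := (isBigO_refl (fun s : ℝ => s ^ t) (𝓝 0)).const_mul_left (c' / t.factorial)
          exact h.congr_left fun s => by ring
        have h2 : (fun s : ℝ => s ^ (t+1)) =O[𝓝 (0:ℝ)] fun s => s ^ t :=
          (isLittleO_pow_pow (Nat.lt_succ_self t)).isBigO
        exact ((ihm.trans h2).add h1).congr_left fun s => by ring
      have hαsub : (fun s : ℝ => α (m+1) s - α (m+1) 0) =O[𝓝 (0:ℝ)] fun s => s := by
        have h := ((hαsmooth (m+1) (by omega) hm1d).differentiable (by exact_mod_cast (show d ≠ 0 by omega)) 0).isBigO_sub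
        simpa using h
      have hkey : (fun s : ℝ => deriv (g m) s
          - (∏ i ∈ Finset.Icc (m+1) n, α i 0) * s ^ t / (t.factorial : ℝ))
          =O[𝓝 (0:ℝ)] fun s => s ^ (t + 1) := by
        have T1 : (fun s : ℝ => -(α m s) * g (m-1) s) =O[𝓝 (0:ℝ)] fun s => s ^ (t+1) := by
          rcases eq_or_lt_of_le hm1 with h | h
          · have he : (fun s : ℝ => -(α m s) * g (m-1) s) = fun _ => (0:ℝ) := by
              funext s; rw [← h, hα1]; ring
            rw [he]; exact isBigO_zero _ _
          · exact hmulO _ _ (t+1) ((hαO1 m h hmd).neg_left)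
              (crude (t+1) (m-1) (by omega) (by omega) (by omega))
        have TA : (fun s : ℝ => (α (m+1) s - α (m+1) 0) * g (m+1) s)
            =O[𝓝 (0:ℝ)] fun s => s ^ (t+1) := by
          have h := hαsub.mul hgm1O
          exact h.congr_right fun s => (pow_succ' s t).symm
        have TB : (fun s : ℝ => α (m+1) 0 * (g (m+1) s - c' * s ^ t / (t.factorial : ℝ)))
            =O[𝓝 (0:ℝ)] fun s => s ^ (t+1) := ihm.const_mul_left _
        have heq : (fun s : ℝ => deriv (g m) s
            - (∏ i ∈ Finset.Icc (m+1) n, α i 0) * s ^ t / (t.factorial : ℝ))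
            =ᶠ[𝓝 (0:ℝ)] fun s => -(α m s) * g (m-1) s
              + ((α (m+1) s - α (m+1) 0) * g (m+1) s
                + α (m+1) 0 * (g (m+1) s - c' * s ^ t / (t.factorial : ℝ))) := by
          filter_upwards [hgFrenet m hm1 hmd] with s hs
          rw [hs, hcp]; ring
        exact heq.trans_isBigO (T1.add (TA.add TB))
      have hpoly : Differentiable ℝ (fun s : ℝ =>
          (∏ i ∈ Finset.Icc (m+1) n, α i 0) * s ^ (t+1) / (((t+1).factorial : ℕ) : ℝ)) :=
        ((differentiable_pow (t+1)).const_mul _).div_const _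
      apply integ_step ((hgdiff m hm1 hmd).sub hpoly)
      · rw [Pi.sub_apply, sub_eq_zero, hg0 m hm1 hmd, if_neg hmn]
        simp
      · have hder : deriv (fun s : ℝ => g m s
            - (∏ i ∈ Finset.Icc (m+1) n, α i 0) * s ^ (t+1) / (((t+1).factorial : ℕ) : ℝ))
            = fun s => deriv (g m) s
              - (∏ i ∈ Finset.Icc (m+1) n, α i 0) * s ^ t / (t.factorial : ℝ) := by
          funext s
          have hp : HasDerivAt (fun s : ℝ =>
              (∏ i ∈ Finset.Icc (m+1) n, α i 0) * s ^ (t+1) / (((t+1).factorial : ℕ) : ℝ))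
              ((∏ i ∈ Finset.Icc (m+1) n, α i 0) * s ^ t / (t.factorial : ℝ)) s := by
            have h1 := ((hasDerivAt_pow (t+1) s).const_mul
              (∏ i ∈ Finset.Icc (m+1) n, α i 0)).div_const (((t+1).factorial : ℕ) : ℝ)
            refine h1.congr_deriv ?_
            simp only [Nat.add_sub_cancel, Nat.cast_add, Nat.cast_one]
            have hfa : (((t+1).factorial : ℕ) : ℝ) = (t+1) * (t.factorial : ℝ) := by
              rw [Nat.factorial_succ]; push_cast; ring
            rw [hfa]
            have htne : (t.factorial : ℝ) ≠ 0 := by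
              exact_mod_cast t.factorial_ne_zero
            field_simp
          rw [deriv_fun_sub (hgdiff m hm1 hmd s) hp.differentiableAt, hp.deriv]
        simp only [Pi.sub_def]
        rw [hder]
        exact hkey
  -- final assembly
  obtain ⟨p, rfl⟩ : ∃ p, n = p + 1 := ⟨n - 1, by omega⟩
  have hprec := precise p (by omega)
  rw [show p + 1 - p = 1 from by omega] at hprec
  have hrdiff : Differentiable ℝ r := hr.differentiable (by exact_mod_cast Nat.succ_ne_zero d)
  have hfdiff : Differentiable ℝ (fun s : ℝ => (⟪r s, V (p+1) 0⟫ : ℝ)) := fun s =>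
    ((hrdiff s).hasDerivAt.inner ℝ (hasDerivAt_const s (V (p+1) 0))).differentiableAt
  have hpoly : Differentiable ℝ (fun s : ℝ =>
      (∏ i ∈ Finset.Icc 2 (p+1), α i 0) * s ^ (p+1) / (((p+1).factorial : ℕ) : ℝ)) :=
    ((differentiable_pow (p+1)).const_mul _).div_const _
  apply integ_step (hfdiff.sub hpoly)
  · simp [hr0]
  · have hder : deriv (fun s : ℝ => (⟪r s, V (p+1) 0⟫ : ℝ)
        - (∏ i ∈ Finset.Icc 2 (p+1), α i 0) * s ^ (p+1) / (((p+1).factorial : ℕ) : ℝ))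
        = fun s => (⟪deriv r s, V (p+1) 0⟫ : ℝ)
          - (∏ i ∈ Finset.Icc 2 (p+1), α i 0) * s ^ p / (p.factorial : ℝ) := by
      funext s
      have hD : HasDerivAt (fun s : ℝ => (⟪r s, V (p+1) 0⟫ : ℝ))
          (⟪r s, (0 : EuclideanSpace ℝ (Fin d))⟫ + ⟪deriv r s, V (p+1) 0⟫) s :=
        (hrdiff s).hasDerivAt.inner ℝ (hasDerivAt_const s (V (p+1) 0))
      have hp : HasDerivAt (fun s : ℝ =>
          (∏ i ∈ Finset.Icc 2 (p+1), α i 0) * s ^ (p+1) / (((p+1).factorial : ℕ) : ℝ))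
          ((∏ i ∈ Finset.Icc 2 (p+1), α i 0) * s ^ p / (p.factorial : ℝ)) s := by
        have h1 := ((hasDerivAt_pow (p+1) s).const_mul
          (∏ i ∈ Finset.Icc 2 (p+1), α i 0)).div_const (((p+1).factorial : ℕ) : ℝ)
        refine h1.congr_deriv ?_
        simp only [Nat.add_sub_cancel, Nat.cast_add, Nat.cast_one]
        have hfa : (((p+1).factorial : ℕ) : ℝ) = (p+1) * (p.factorial : ℝ) := by
          rw [Nat.factorial_succ]; push_cast; ring
        rw [hfa]
        have htne : (p.factorial : ℝ) ≠ 0 := by exact_mod_cast p.factorial_ne_zero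
        field_simp
      rw [deriv_fun_sub hD.differentiableAt hp.differentiableAt, hD.deriv, hp.deriv,
        inner_zero_right]
      ring
    simp only [Pi.sub_def]
    rw [hder]
    have heq : (fun s : ℝ => (⟪deriv r s, V (p+1) 0⟫ : ℝ)
        - (∏ i ∈ Finset.Icc 2 (p+1), α i 0) * s ^ p / (p.factorial : ℝ))
        =ᶠ[𝓝 (0:ℝ)] fun s => g 1 s
          - (∏ i ∈ Finset.Icc (1+1) (p+1), α i 0) * s ^ p / (p.factorial : ℝ) := by
      filter_upwards [hV1] with s hs
      simp only [hgdef]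
      rw [hs]
    exact heq.trans_isBigO hprec
end

section
/- Let k₂, k₃ be nonzero real numbers and let g : ℝ³ → ℝ be C^∞ on a neighborhood of the origin; write points of ℝ³ as (x, y, z). For L > 0 and a function f on the curve, let ⟨f⟩ = (1/(2L)) ∫_{−L}^{L} f(x, k₂x², k₃x³) dx. For each small L > 0, let (w_y(L), b(L)) be the unique solution of the 2×2 linear system [[⟨y²⟩, ⟨y⟩], [⟨y⟩, 1]]·(w_y, b)ᵀ = (⟨g y⟩, ⟨g⟩)ᵀ, where y denotes the function x ↦ k₂x². Then as L → 0⁺: w_y(L) = (∂g/∂y)(0) + (1/(2k₂))·(∂²g/∂x²)(0) + O(L²). -/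
open MeasureTheory Filter Asymptotics Topology intervalIntegral

/-- The average of a function of the data point on the curve `x ↦ (x, k₂x², k₃x³)`,
with `x` uniform on `[−L, L]`. -/
noncomputable def curveAvg (k₂ k₃ : ℝ) (L : ℝ) (f : ℝ × ℝ × ℝ → ℝ) : ℝ :=
  (1 / (2 * L)) * ∫ x in (-L)..L, f (x, k₂ * x ^ 2, k₃ * x ^ 3)

section StmtAux



/-- MVT bound: if `f 0 = 0` and `|f'| ≤ M|y|^k` on an interval, then `|f| ≤ M|x|^(k+1)`. -/
lemma lemA {f f' : ℝ → ℝ} {δ M : ℝ} {k : ℕ} (hM : 0 ≤ M)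
    (hdiff : ∀ y ∈ Set.Ioo (-δ) δ, HasDerivAt f (f' y) y)
    (h0 : f 0 = 0)
    (hbound : ∀ y ∈ Set.Ioo (-δ) δ, |f' y| ≤ M * |y| ^ k) :
    ∀ x ∈ Set.Ioo (-δ) δ, |f x| ≤ M * |x| ^ (k + 1) := by
  intro x hx
  have h0mem : (0 : ℝ) ∈ Set.Ioo (-δ) δ := by
    constructor <;> nlinarith [hx.1, hx.2, abs_nonneg x, le_abs_self x, neg_abs_le x]
  have hsub : Set.uIcc 0 x ⊆ Set.Ioo (-δ) δ := by
    intro y hy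
    rcases Set.mem_uIcc.1 hy with h | h
    · exact ⟨by nlinarith [hx.1, hx.2, h.1, h.2], by nlinarith [hx.1, hx.2, h.1, h.2]⟩
    · exact ⟨by nlinarith [hx.1, hx.2, h.1, h.2], by nlinarith [hx.1, hx.2, h.1, h.2]⟩
  have habs : ∀ y ∈ Set.uIcc 0 x, |y| ≤ |x| := by
    intro y hy
    rcases Set.mem_uIcc.1 hy with h | h
    · rcases h with ⟨h1, h2⟩; rw [abs_of_nonneg h1]; exact h2.trans (le_abs_self x)
    · rcases h with ⟨h1, h2⟩
      rw [abs_of_nonpos h2]; calc -y ≤ -x := by linarith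
        _ ≤ |x| := neg_le_abs x
  have key := Convex.norm_image_sub_le_of_norm_hasDerivWithin_le
    (f := f) (f' := f') (s := Set.uIcc 0 x) (C := M * |x| ^ k)
    (fun y hy => (hdiff y (hsub hy)).hasDerivWithinAt)
    (fun y hy => by
      calc ‖f' y‖ = |f' y| := rfl
        _ ≤ M * |y| ^ k := hbound y (hsub hy)
        _ ≤ M * |x| ^ k := by
            apply mul_le_mul_of_nonneg_left _ hM
            exact pow_le_pow_left₀ (abs_nonneg y) (habs y hy) k)
    (convex_uIcc 0 x) Set.left_mem_uIcc Set.right_mem_uIcc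
  simpa [h0, Real.norm_eq_abs, pow_succ, mul_assoc] using key

/-- `deriv` of a smooth-at-a-point function is smooth at that point. -/
lemma contDiffAt_deriv_of_top {f : ℝ → ℝ} {x : ℝ} (hf : ContDiffAt ℝ (⊤ : ℕ∞) f x) :
    ContDiffAt ℝ (⊤ : ℕ∞) (deriv f) x := by
  have h1 : ContDiffAt ℝ (⊤ : ℕ∞) (fderiv ℝ f) x := hf.fderiv_right (by exact_mod_cast le_refl _)
  have h2 : ContDiffAt ℝ (⊤ : ℕ∞) (fun y => fderiv ℝ f y 1) x := h1.clm_apply contDiffAt_const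
  exact h2.congr_of_eventuallyEq (Filter.Eventually.of_forall fun y => (fderiv_apply_one_eq_deriv).symm)

/-- smooth at 0 gives differentiability (with `HasDerivAt`) on an interval around 0. -/
lemma exists_hasDerivAt_Ioo {f : ℝ → ℝ} (hf : ContDiffAt ℝ (⊤ : ℕ∞) f 0) :
    ∃ δ > 0, ∀ y ∈ Set.Ioo (-δ) δ, HasDerivAt f (deriv f y) y := by
  obtain ⟨u, hu, hcd⟩ := hf.contDiffOn (m := 1) (by exact_mod_cast le_top) (by simp)
  obtain ⟨ε, hε, hball⟩ := Metric.mem_nhds_iff.1 hu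
  refine ⟨ε, hε, fun y hy => ?_⟩
  have hyb : y ∈ Metric.ball (0 : ℝ) ε := by
    rw [Real.ball_eq_Ioo]; simpa using hy
  have : DifferentiableOn ℝ f (Metric.ball (0:ℝ) ε) :=
    (hcd.mono hball).differentiableOn one_ne_zero
  exact ((this y hyb).differentiableAt (Metric.isOpen_ball.mem_nhds hyb)).hasDerivAt

/-- Peano-type Taylor remainder bound for smooth functions. -/
lemma taylor_bound (n : ℕ) : ∀ (f : ℝ → ℝ), ContDiffAt ℝ (⊤ : ℕ∞) f 0 →
    ∃ δ > 0, ∃ M ≥ (0:ℝ), ∀ x ∈ Set.Ioo (-δ) δ,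
      |f x - ∑ i ∈ Finset.range (n + 1), iteratedDeriv i f 0 / (i.factorial : ℝ) * x ^ i|
        ≤ M * |x| ^ (n + 1) := by
  induction n with
  | zero =>
    intro f hf
    obtain ⟨δ₁, hδ₁, hdiff⟩ := exists_hasDerivAt_Ioo hf
    have hdc : ContinuousAt (deriv f) 0 := (contDiffAt_deriv_of_top hf).continuousAt
    obtain ⟨δ₂, hδ₂, hbd⟩ := Metric.continuousAt_iff.1 hdc 1 one_pos
    set M := |deriv f 0| + 1 with hM
    have hM0 : (0:ℝ) ≤ M := by positivity
    refine ⟨min δ₁ δ₂, lt_min hδ₁ hδ₂, M, hM0, ?_⟩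
    have := lemA (f := fun x => f x - f 0) (f' := deriv f) (δ := min δ₁ δ₂) (k := 0) hM0
      (fun y hy => by
        have h := min_le_left δ₁ δ₂
        have h1 : y ∈ Set.Ioo (-δ₁) δ₁ := ⟨by linarith [hy.1], by linarith [hy.2]⟩
        exact (hdiff y h1).sub_const (f 0))
      (by simp)
      (fun y hy => by
        have hyd : dist y 0 < δ₂ := by
          simp only [Real.dist_eq, sub_zero]
          rw [abs_lt]; exact ⟨by linarith [hy.1, min_le_right δ₁ δ₂], by linarith [hy.2, min_le_right δ₁ δ₂]⟩
        have := hbd hyd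
        rw [Real.dist_eq] at this
        simp only [pow_zero, mul_one, hM]
        calc |deriv f y| = |deriv f 0 + (deriv f y - deriv f 0)| := by ring_nf
          _ ≤ |deriv f 0| + |deriv f y - deriv f 0| := abs_add_le _ _
          _ ≤ |deriv f 0| + 1 := by linarith
        )
    intro x hx
    have := this x hx
    simpa using this
  | succ n ih =>
    intro f hf
    have hφ : ContDiffAt ℝ (⊤ : ℕ∞) (deriv f) 0 := contDiffAt_deriv_of_top hf
    obtain ⟨δ₁, hδ₁, M, hM0, hIH⟩ := ih (deriv f) hφ
    obtain ⟨δ₂, hδ₂, hdiff⟩ := exists_hasDerivAt_Ioo hf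
    set δ := min δ₁ δ₂ with hδdef
    have hδ : 0 < δ := lt_min hδ₁ hδ₂
    set R : ℝ → ℝ := fun x =>
      f x - ∑ i ∈ Finset.range (n + 2), iteratedDeriv i f 0 / (i.factorial : ℝ) * x ^ i with hR
    have hR0 : R 0 = 0 := by
      simp only [hR, Finset.sum_range_succ']
      simp [iteratedDeriv_zero]
    have hRd : ∀ y ∈ Set.Ioo (-δ) δ, HasDerivAt R
        (deriv f y - ∑ i ∈ Finset.range (n + 1),
          iteratedDeriv i (deriv f) 0 / (i.factorial : ℝ) * y ^ i) y := by
      intro y hy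
      have hy2 : y ∈ Set.Ioo (-δ₂) δ₂ :=
        ⟨by have := hy.1; have h := min_le_right δ₁ δ₂; simp only [hδdef] at this; linarith,
         by have := hy.2; have h := min_le_right δ₁ δ₂; simp only [hδdef] at this; linarith⟩
      have hP : HasDerivAt (fun x => ∑ i ∈ Finset.range (n + 2),
          iteratedDeriv i f 0 / (i.factorial : ℝ) * x ^ i)
          (∑ i ∈ Finset.range (n + 2),
            iteratedDeriv i f 0 / (i.factorial : ℝ) * (i * y ^ (i - 1))) y := by
        apply HasDerivAt.fun_sum
        intro i _
        exact (hasDerivAt_pow i y).const_mul _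
      have hsum : (∑ i ∈ Finset.range (n + 2),
            iteratedDeriv i f 0 / (i.factorial : ℝ) * (i * y ^ (i - 1)))
          = ∑ i ∈ Finset.range (n + 1),
            iteratedDeriv i (deriv f) 0 / (i.factorial : ℝ) * y ^ i := by
        rw [Finset.sum_range_succ']
        have hterm : ∀ i ∈ Finset.range (n + 1),
            iteratedDeriv (i+1) f 0 / ((i+1).factorial : ℝ) * (((i+1 : ℕ) : ℝ) * y ^ (i + 1 - 1))
            = iteratedDeriv i (deriv f) 0 / (i.factorial : ℝ) * y ^ i := by
          intro i _
          rw [← iteratedDeriv_succ']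
          have hfact : (((i+1).factorial : ℕ) : ℝ) = ((i:ℝ) + 1) * (i.factorial : ℝ) := by
            rw [Nat.factorial_succ]; push_cast; ring
          rw [hfact]
          have h1 : (i.factorial : ℝ) ≠ 0 := Nat.cast_ne_zero.2 i.factorial_ne_zero
          have h2 : ((i:ℝ) + 1) ≠ 0 := by positivity
          have h3 : i + 1 - 1 = i := rfl
          rw [h3]
          push_cast
          field_simp
        rw [Finset.sum_congr rfl hterm]
        simp
      rw [← hsum]
      exact ((hdiff y hy2).sub hP)
    have key := lemA (f := R) (δ := δ) (k := n + 1) hM0 hRd hR0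
      (fun y hy => by
        apply hIH
        exact ⟨by have := hy.1; have h := min_le_left δ₁ δ₂; simp only [hδdef] at this; linarith,
         by have := hy.2; have h := min_le_left δ₁ δ₂; simp only [hδdef] at this; linarith⟩)
    exact ⟨δ, hδ, M, hM0, key⟩

lemma second_deriv_curve (k₂ k₃ : ℝ) (g : ℝ × ℝ × ℝ → ℝ)
    (hg : ContDiffAt ℝ (⊤ : ℕ∞) g 0) :
    iteratedDeriv 2 (fun x : ℝ => g (x, k₂ * x ^ 2, k₃ * x ^ 3)) 0
      = fderiv ℝ (fderiv ℝ g) 0 ((1:ℝ),(0:ℝ),(0:ℝ)) ((1:ℝ),(0:ℝ),(0:ℝ))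
        + 2 * k₂ * fderiv ℝ g 0 ((0:ℝ),(1:ℝ),(0:ℝ)) := by
  set γ : ℝ → ℝ × ℝ × ℝ := fun x => (x, k₂ * x ^ 2, k₃ * x ^ 3) with hγdef
  have hγ0 : γ 0 = 0 := by simp [hγdef, Prod.ext_iff]
  have hγd : ∀ x : ℝ, HasDerivAt γ (1, 2 * k₂ * x, 3 * k₃ * x ^ 2) x := by
    intro x
    have h2 : HasDerivAt (fun x : ℝ => k₂ * x ^ 2) (2 * k₂ * x) x := by
      have := (hasDerivAt_pow 2 x).const_mul k₂
      exact this.congr_deriv (by push_cast; ring)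
    have h3 : HasDerivAt (fun x : ℝ => k₃ * x ^ 3) (3 * k₃ * x ^ 2) x := by
      have := (hasDerivAt_pow 3 x).const_mul k₃
      exact this.congr_deriv (by push_cast; ring)
    exact (hasDerivAt_id x).prodMk (h2.prodMk h3)
  -- differentiability of g near 0
  obtain ⟨u, hu, hcd⟩ := hg.contDiffOn (m := 1) (by exact_mod_cast le_top) (by simp)
  obtain ⟨ε, hε, hball⟩ := Metric.mem_nhds_iff.1 hu
  have hdg : ∀ p ∈ Metric.ball (0 : ℝ × ℝ × ℝ) ε, DifferentiableAt ℝ g p := by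
    intro p hp
    have : DifferentiableOn ℝ g (Metric.ball (0 : ℝ × ℝ × ℝ) ε) :=
      (hcd.mono hball).differentiableOn one_ne_zero
    exact (this p hp).differentiableAt (Metric.isOpen_ball.mem_nhds hp)
  have hγc : ContinuousAt γ 0 := by
    apply Continuous.continuousAt
    fun_prop
  have hev : ∀ᶠ x in 𝓝 (0:ℝ), γ x ∈ Metric.ball (0 : ℝ × ℝ × ℝ) ε := by
    have : Metric.ball (0 : ℝ × ℝ × ℝ) ε ∈ 𝓝 (γ 0) := by
      rw [hγ0]; exact Metric.ball_mem_nhds _ hε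
    exact hγc this
  set φ : ℝ → ℝ := fun x => g (γ x) with hφdef
  set v : ℝ → ℝ × ℝ × ℝ := fun x => (1, 2 * k₂ * x, 3 * k₃ * x ^ 2) with hvdef
  have hφd : ∀ᶠ x in 𝓝 (0:ℝ), deriv φ x = fderiv ℝ g (γ x) (v x) := by
    filter_upwards [hev] with x hx
    have hgd : DifferentiableAt ℝ g (γ x) := hdg _ hx
    have : HasDerivAt φ (fderiv ℝ g (γ x) (v x)) x :=
      hgd.hasFDerivAt.comp_hasDerivAt x (hγd x)
    exact this.deriv
  set H := fderiv ℝ (fderiv ℝ g) 0 with hHdef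
  have hg2 : ContDiffAt ℝ 1 (fderiv ℝ g) 0 := hg.fderiv_right (WithTop.coe_le_coe.2 le_top)
  have hH : HasFDerivAt (fderiv ℝ g) H (γ 0) := by
    rw [hγ0]
    exact (hg2.differentiableAt one_ne_zero).hasFDerivAt
  have hF : HasDerivAt (fun x => fderiv ℝ g (γ x)) (H ((1:ℝ),(0:ℝ),(0:ℝ))) 0 := by
    have := hH.comp_hasDerivAt 0 (hγd 0)
    exact this.congr_deriv (by simp)
  have hv : HasDerivAt v ((0:ℝ), 2 * k₂, (0:ℝ)) 0 := by
    have h1 : HasDerivAt (fun _ : ℝ => (1:ℝ)) 0 0 := hasDerivAt_const 0 1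
    have h2 : HasDerivAt (fun x : ℝ => 2 * k₂ * x) (2 * k₂) 0 := by
      simpa using (hasDerivAt_id (0:ℝ)).const_mul (2 * k₂)
    have h3 : HasDerivAt (fun x : ℝ => 3 * k₃ * x ^ 2) 0 0 := by
      have := (hasDerivAt_pow 2 (0:ℝ)).const_mul (3 * k₃)
      exact this.congr_deriv (by norm_num)
    exact h1.prodMk (h2.prodMk h3)
  have hcomb : HasDerivAt (fun x => fderiv ℝ g (γ x) (v x))
      (H ((1:ℝ),(0:ℝ),(0:ℝ)) (v 0) + fderiv ℝ g (γ 0) ((0:ℝ), 2 * k₂, (0:ℝ))) 0 :=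
    hF.clm_apply hv
  have hv0 : v 0 = ((1:ℝ),(0:ℝ),(0:ℝ)) := by simp [hvdef, Prod.ext_iff]
  have hD2 : deriv (deriv φ) 0
      = H ((1:ℝ),(0:ℝ),(0:ℝ)) ((1:ℝ),(0:ℝ),(0:ℝ)) + fderiv ℝ g 0 ((0:ℝ), 2 * k₂, (0:ℝ)) := by
    have heq : deriv φ =ᶠ[𝓝 (0:ℝ)] fun x => fderiv ℝ g (γ x) (v x) := hφd
    rw [heq.deriv_eq]
    rw [hcomb.deriv, hv0, hγ0]
  have hsmul : fderiv ℝ g 0 ((0:ℝ), 2 * k₂, (0:ℝ)) = 2 * k₂ * fderiv ℝ g 0 ((0:ℝ),(1:ℝ),(0:ℝ)) := by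
    have : ((0:ℝ), 2 * k₂, (0:ℝ)) = (2 * k₂) • (((0:ℝ),(1:ℝ),(0:ℝ)) : ℝ × ℝ × ℝ) := by
      simp [Prod.ext_iff]
    rw [this, _root_.map_smul]; rfl
  rw [iteratedDeriv_succ, iteratedDeriv_one]
  show deriv (deriv φ) 0 = _
  rw [hD2, hsmul]

end StmtAux

set_option maxHeartbeats 2000000 in
/-- for data on the curve `x ↦ (x, k₂x², k₃x³)` in `ℝ³` with labels `g`,
if `(w_y(L), b(L))` solves the 2×2 normal equations
`[[⟨y²⟩, ⟨y⟩], [⟨y⟩, 1]]·(w_y, b)ᵀ = (⟨g y⟩, ⟨g⟩)ᵀ` for all small `L > 0`, then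
`w_y(L) = (∂g/∂y)(0) + (1/(2k₂))(∂²g/∂x²)(0) + O(L²)` as `L → 0⁺`. -/
theorem stmt_12 (k₂ k₃ : ℝ) (hk₂ : k₂ ≠ 0) (hk₃ : k₃ ≠ 0)
    (g : ℝ × ℝ × ℝ → ℝ) (hg : ContDiffAt ℝ (⊤ : ℕ∞) g 0)
    (w b : ℝ → ℝ)
    (hsys : ∀ᶠ L in 𝓝[>] (0 : ℝ),
      curveAvg k₂ k₃ L (fun p => p.2.1 ^ 2) * w L
          + curveAvg k₂ k₃ L (fun p => p.2.1) * b L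
        = curveAvg k₂ k₃ L (fun p => g p * p.2.1) ∧
      curveAvg k₂ k₃ L (fun p => p.2.1) * w L + b L
        = curveAvg k₂ k₃ L (fun p => g p)) :
    (fun L : ℝ =>
        w L - (fderiv ℝ g 0 ((0 : ℝ), (1 : ℝ), (0 : ℝ))
          + 1 / (2 * k₂)
            * iteratedFDeriv ℝ 2 g 0 (fun _ => ((1 : ℝ), (0 : ℝ), (0 : ℝ)))))
      =O[𝓝[>] (0 : ℝ)] fun L => L ^ 2 := by
  have hg' : ContDiffAt ℝ (⊤ : ℕ∞) g 0 := hg.of_le (by simp)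
  set φ : ℝ → ℝ := fun x : ℝ => g (x, k₂ * x ^ 2, k₃ * x ^ 3) with hφdef
  have hγ : ContDiff ℝ (⊤ : ℕ∞) (fun x : ℝ => ((x, k₂ * x ^ 2, k₃ * x ^ 3) : ℝ × ℝ × ℝ)) := by
    fun_prop
  have hφ : ContDiffAt ℝ (⊤ : ℕ∞) φ 0 := by
    have h0 : ((0:ℝ), k₂ * (0:ℝ) ^ 2, k₃ * (0:ℝ) ^ 3) = (0 : ℝ × ℝ × ℝ) := by
      simp [Prod.ext_iff]
    have hg'' : ContDiffAt ℝ (⊤ : ℕ∞) g ((0:ℝ), k₂ * (0:ℝ) ^ 2, k₃ * (0:ℝ) ^ 3) := by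
      rw [h0]; exact hg'
    exact hg''.comp 0 hγ.contDiffAt
  -- Taylor data
  obtain ⟨δ, hδpos, M, hM0, hRb⟩ := taylor_bound 6 φ hφ
  set c : ℕ → ℝ := fun i => iteratedDeriv i φ 0 / (i.factorial : ℝ) with hcdef
  set P : ℝ → ℝ := fun x => ∑ i ∈ Finset.range 7, c i * x ^ i with hPdef
  have hPcont : Continuous P := by fun_prop
  -- continuity of φ near 0
  obtain ⟨u, hu, hcd1⟩ := hφ.contDiffOn (m := 1) (by exact_mod_cast le_top) (by simp)
  obtain ⟨δc, hδcpos, hball⟩ := Metric.mem_nhds_iff.1 hu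
  have hIooball : Set.Ioo (-δc) δc = Metric.ball (0:ℝ) δc := by
    rw [Real.ball_eq_Ioo]; norm_num
  have hφcont : ContinuousOn φ (Set.Ioo (-δc) δc) := by
    rw [hIooball]; exact (hcd1.mono hball).continuousOn
  -- target value
  set T : ℝ := fderiv ℝ g 0 ((0 : ℝ), (1 : ℝ), (0 : ℝ))
      + 1 / (2 * k₂) * iteratedFDeriv ℝ 2 g 0 (fun _ => ((1 : ℝ), (0 : ℝ), (0 : ℝ))) with hTdef
  have hT : T = c 2 / k₂ := by
    have h1 : iteratedFDeriv ℝ 2 g 0 (fun _ => ((1 : ℝ), (0 : ℝ), (0 : ℝ)))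
        = fderiv ℝ (fderiv ℝ g) 0 ((1:ℝ),(0:ℝ),(0:ℝ)) ((1:ℝ),(0:ℝ),(0:ℝ)) :=
      iteratedFDeriv_two_apply g 0 _
    have h2 : c 2 = (fderiv ℝ (fderiv ℝ g) 0 ((1:ℝ),(0:ℝ),(0:ℝ)) ((1:ℝ),(0:ℝ),(0:ℝ))
        + 2 * k₂ * fderiv ℝ g 0 ((0:ℝ),(1:ℝ),(0:ℝ))) / 2 := by
      rw [hcdef]
      simp only [second_deriv_curve k₂ k₃ g hg']
      norm_num [Nat.factorial]
      exact second_deriv_curve k₂ k₃ g hg'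
    rw [hTdef, h1, h2]
    field_simp
    ring
  -- the constant
  set Cbig : ℝ := 16/105 * |c 4| + 8/63 * |c 6| + 8/3 * M with hCbigdef
  have hCbig0 : 0 ≤ Cbig := by positivity
  rw [isBigO_iff]
  refine ⟨45 * Cbig / (8 * |k₂|), ?_⟩
  set ε0 : ℝ := min (min δ δc) 1 with hε0def
  have hε0pos : 0 < ε0 := lt_min (lt_min hδpos hδcpos) one_pos
  have h1 : ∀ᶠ L in 𝓝[>] (0:ℝ), L < ε0 :=
    (eventually_lt_nhds hε0pos).filter_mono nhdsWithin_le_nhds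
  have h2 : ∀ᶠ L in 𝓝[>] (0:ℝ), 0 < L :=
    eventually_of_mem self_mem_nhdsWithin (fun x hx => hx)
  filter_upwards [hsys, h1, h2] with L hLsys hLε hLpos
  have hLδ : L < δ := lt_of_lt_of_le hLε ((min_le_left _ _).trans (min_le_left _ _))
  have hLδc : L < δc := lt_of_lt_of_le hLε ((min_le_left _ _).trans (min_le_right _ _))
  have hL1 : L ≤ 1 := le_of_lt (lt_of_lt_of_le hLε (min_le_right _ _))
  have hLne : L ≠ 0 := ne_of_gt hLpos
  -- interval facts
  have hLL : -L ≤ L := by linarith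
  have huIcc : Set.uIcc (-L) L = Set.Icc (-L) L := Set.uIcc_of_le hLL
  have hsubc : Set.uIcc (-L) L ⊆ Set.Ioo (-δc) δc := by
    rw [huIcc]; intro x hx; exact ⟨by linarith [hx.1], by linarith [hx.2]⟩
  have hsubδ : Set.uIcc (-L) L ⊆ Set.Ioo (-δ) δ := by
    rw [huIcc]; intro x hx; exact ⟨by linarith [hx.1], by linarith [hx.2]⟩
  -- integrability
  have hintφ : IntervalIntegrable φ volume (-L) L :=
    (hφcont.mono hsubc).intervalIntegrable
  have hintP : IntervalIntegrable P volume (-L) L :=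
    hPcont.intervalIntegrable _ _
  have hintR : IntervalIntegrable (fun x => φ x - P x) volume (-L) L := hintφ.sub hintP
  have hintx2φ : IntervalIntegrable (fun x => x ^ 2 * φ x) volume (-L) L :=
    (ContinuousOn.mul (continuous_pow 2).continuousOn (hφcont.mono hsubc)).intervalIntegrable
  have hintx2P : IntervalIntegrable (fun x => x ^ 2 * P x) volume (-L) L :=
    ((continuous_pow 2).mul hPcont).intervalIntegrable _ _
  have hintx2R : IntervalIntegrable (fun x => x ^ 2 * (φ x - P x)) volume (-L) L := by
    have : (fun x => x ^ 2 * (φ x - P x)) = fun x => x ^ 2 * φ x - x ^ 2 * P x := by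
      funext x; ring
    rw [this]; exact hintx2φ.sub hintx2P
  -- integrals
  set E₀ : ℝ := ∫ x in (-L)..L, (φ x - P x) with hE₀def
  set E₂ : ℝ := ∫ x in (-L)..L, x ^ 2 * (φ x - P x) with hE₂def
  set I₀ : ℝ := ∫ x in (-L)..L, φ x with hI₀def
  set I₂ : ℝ := ∫ x in (-L)..L, x ^ 2 * φ x with hI₂def
  have hPint : ∫ x in (-L)..L, P x
      = 2 * c 0 * L + 2/3 * c 2 * L^3 + 2/5 * c 4 * L^5 + 2/7 * c 6 * L^7 := by
    rw [hPdef]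
    beta_reduce
    rw [intervalIntegral.integral_finset_sum (f := fun i x => c i * x ^ i) (fun i _ =>
      ((continuous_const.mul (continuous_pow i)).intervalIntegrable _ _))]
    rw [Finset.sum_congr rfl (fun i _ => by
      rw [intervalIntegral.integral_const_mul, integral_pow])]
    simp [Finset.sum_range_succ]
    ring
  have hP2int : ∫ x in (-L)..L, x ^ 2 * P x
      = 2/3 * c 0 * L^3 + 2/5 * c 2 * L^5 + 2/7 * c 4 * L^7 + 2/9 * c 6 * L^9 := by
    have heq : (fun x : ℝ => x ^ 2 * P x) = fun x => ∑ i ∈ Finset.range 7, c i * x ^ (i + 2) := by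
      funext x; rw [hPdef, Finset.mul_sum]
      exact Finset.sum_congr rfl (fun i _ => by ring)
    rw [heq]
    rw [intervalIntegral.integral_finset_sum (f := fun i x => c i * x ^ (i + 2)) (fun i _ =>
      ((continuous_const.mul (continuous_pow (i+2))).intervalIntegrable _ _))]
    rw [Finset.sum_congr rfl (fun i _ => by
      rw [intervalIntegral.integral_const_mul, integral_pow])]
    simp [Finset.sum_range_succ]
    ring
  have hI₀eq : I₀ = 2 * c 0 * L + 2/3 * c 2 * L^3 + 2/5 * c 4 * L^5 + 2/7 * c 6 * L^7 + E₀ := by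
    rw [hI₀def, hE₀def, show (fun x => φ x) = fun x => P x + (φ x - P x) from funext fun x => by ring]
    rw [intervalIntegral.integral_add hintP hintR, hPint]
  have hI₂eq : I₂ = 2/3 * c 0 * L^3 + 2/5 * c 2 * L^5 + 2/7 * c 4 * L^7 + 2/9 * c 6 * L^9 + E₂ := by
    rw [hI₂def, hE₂def, show (fun x : ℝ => x ^ 2 * φ x)
      = fun x => x ^ 2 * P x + x ^ 2 * (φ x - P x) from funext fun x => by ring]
    rw [intervalIntegral.integral_add hintx2P hintx2R, hP2int]
  -- remainder bounds
  have hRptw : ∀ x ∈ Set.uIcc (-L) L, |φ x - P x| ≤ M * L ^ 7 := by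
    intro x hx
    have h1 := hRb x (hsubδ hx)
    have h2 : |x| ≤ L := by
      rw [huIcc] at hx; rw [abs_le]; exact ⟨hx.1, hx.2⟩
    calc |φ x - P x| = |φ x - ∑ i ∈ Finset.range (6+1), iteratedDeriv i φ 0 / (i.factorial:ℝ) * x ^ i| := by
          rw [hPdef]
      _ ≤ M * |x| ^ (6+1) := h1
      _ ≤ M * L ^ 7 := by
          apply mul_le_mul_of_nonneg_left _ hM0
          calc |x| ^ (6+1) ≤ L ^ (6+1) := pow_le_pow_left₀ (abs_nonneg x) h2 _
            _ = L ^ 7 := by norm_num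
  have hmemuIcc : ∀ x ∈ Set.uIoc (-L) L, x ∈ Set.uIcc (-L) L := by
    intro x hx
    rw [Set.uIoc_of_le hLL] at hx
    rw [huIcc]
    exact Set.Ioc_subset_Icc_self hx
  have hE₀bd : |E₀| ≤ M * L ^ 7 * (2 * L) := by
    have h := intervalIntegral.norm_integral_le_of_norm_le_const
      (C := M * L ^ 7) (f := fun x => φ x - P x) (a := -L) (b := L)
      (fun x hx => hRptw x (hmemuIcc x hx))
    rw [hE₀def]
    calc |∫ x in (-L)..L, (φ x - P x)| ≤ M * L ^ 7 * |L - (-L)| := h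
      _ = M * L ^ 7 * (2 * L) := by rw [show L - (-L) = 2*L by ring, abs_of_pos (by linarith)]
  have hE₂bd : |E₂| ≤ M * L ^ 9 * (2 * L) := by
    have hpt : ∀ x ∈ Set.uIoc (-L) L, ‖x ^ 2 * (φ x - P x)‖ ≤ M * L ^ 9 := by
      intro x hx
      have h2 : |x| ≤ L := by
        have := hmemuIcc x hx; rw [huIcc] at this; rw [abs_le]; exact ⟨this.1, this.2⟩
      have h1 := hRptw x (hmemuIcc x hx)
      calc ‖x ^ 2 * (φ x - P x)‖ = |x| ^ 2 * |φ x - P x| := by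
            rw [Real.norm_eq_abs, abs_mul, abs_pow]
        _ ≤ L ^ 2 * (M * L ^ 7) := by
            apply mul_le_mul (pow_le_pow_left₀ (abs_nonneg x) h2 2) h1 (abs_nonneg _) (by positivity)
        _ = M * L ^ 9 := by ring
    have h := intervalIntegral.norm_integral_le_of_norm_le_const hpt
    rw [hE₂def]
    calc |∫ x in (-L)..L, x ^ 2 * (φ x - P x)| ≤ M * L ^ 9 * |L - (-L)| := h
      _ = M * L ^ 9 * (2 * L) := by rw [show L - (-L) = 2*L by ring, abs_of_pos (by linarith)]
  -- the S estimate
  set S : ℝ := I₂ - L^2/3 * I₀ with hSdef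
  have hSest : |S - 8/45 * c 2 * L^5| ≤ Cbig * L ^ 7 := by
    have hSval : S - 8/45 * c 2 * L^5
        = 16/105 * c 4 * L^7 + 8/63 * c 6 * L^9 + E₂ - L^2/3 * E₀ := by
      rw [hSdef, hI₀eq, hI₂eq]; ring
    rw [hSval]
    have hL7 : (0:ℝ) < L ^ 7 := by positivity
    have h9 : L ^ 9 ≤ L ^ 7 := pow_le_pow_of_le_one (le_of_lt hLpos) hL1 (by norm_num)
    have h10 : L ^ 10 ≤ L ^ 7 := pow_le_pow_of_le_one (le_of_lt hLpos) hL1 (by norm_num)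
    calc |16/105 * c 4 * L^7 + 8/63 * c 6 * L^9 + E₂ - L^2/3 * E₀|
        ≤ |16/105 * c 4 * L^7| + |8/63 * c 6 * L^9| + |E₂| + |L^2/3 * E₀| := by
          have t1 := abs_sub (16/105 * c 4 * L^7 + 8/63 * c 6 * L^9 + E₂) (L^2/3 * E₀)
          have t2 := abs_add_le (16/105 * c 4 * L^7 + 8/63 * c 6 * L^9) E₂
          have t3 := abs_add_le (16/105 * c 4 * L^7) (8/63 * c 6 * L^9)
          linarith
      _ ≤ Cbig * L ^ 7 := by
          rw [hCbigdef]
          have e1 : |16/105 * c 4 * L^7| = 16/105 * |c 4| * L^7 := by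
            rw [abs_mul, abs_mul, abs_of_nonneg (show (0:ℝ) ≤ 16/105 by norm_num),
              abs_of_nonneg (le_of_lt hL7)]
          have e2 : |8/63 * c 6 * L^9| = 8/63 * |c 6| * L^9 := by
            rw [abs_mul, abs_mul, abs_of_nonneg (show (0:ℝ) ≤ 8/63 by norm_num),
              abs_of_nonneg (by positivity : (0:ℝ) ≤ L^9)]
          have e3 : |L^2/3 * E₀| = L^2/3 * |E₀| := by
            rw [abs_mul, abs_of_nonneg (by positivity : (0:ℝ) ≤ L^2/3)]
          have p1 : 8/63 * |c 6| * L^9 ≤ 8/63 * |c 6| * L^7 :=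
            mul_le_mul_of_nonneg_left h9 (by positivity)
          have p2' : M * L^10 ≤ M * L^7 := mul_le_mul_of_nonneg_left h10 hM0
          have p2 : M * L ^ 9 * (2*L) ≤ 2 * M * L^7 := by
            calc M * L ^ 9 * (2*L) = 2*(M*L^10) := by ring
              _ ≤ 2*(M*L^7) := by linarith
              _ = 2 * M * L^7 := by ring
          have p3 : L^2/3 * (M * L^7 * (2*L)) ≤ 2/3 * M * L^7 := by
            calc L^2/3 * (M * L^7 * (2*L)) = 2/3*(M*L^10) := by ring
              _ ≤ 2/3*(M*L^7) := by linarith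
              _ = 2/3 * M * L^7 := by ring
          have p4 : L^2/3 * |E₀| ≤ L^2/3 * (M * L^7 * (2*L)) :=
            mul_le_mul_of_nonneg_left hE₀bd (by positivity)
          rw [e1, e2, e3]
          rw [show (16/105 * |c 4| + 8/63 * |c 6| + 8/3 * M) * L^7
            = 16/105 * |c 4| * L^7 + 8/63 * |c 6| * L^7 + 2*M*L^7 + 2/3*M*L^7 from by ring]
          linarith [p1, p2, p4, hE₂bd, p3]
  -- curveAvg values
  have hA1 : curveAvg k₂ k₃ L (fun p => p.2.1) = k₂ * L^2 / 3 := by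
    show (1 / (2 * L)) * ∫ x in (-L)..L, k₂ * x ^ 2 = _
    rw [intervalIntegral.integral_const_mul, integral_pow]
    field_simp
    ring
  have hA2 : curveAvg k₂ k₃ L (fun p => p.2.1 ^ 2) = k₂^2 * L^4 / 5 := by
    show (1 / (2 * L)) * ∫ x in (-L)..L, (k₂ * x ^ 2) ^ 2 = _
    rw [show (fun x : ℝ => (k₂ * x ^ 2) ^ 2) = fun x : ℝ => k₂^2 * x ^ 4 from
      funext fun x => by ring]
    rw [intervalIntegral.integral_const_mul, integral_pow]
    field_simp
    ring
  have hG0 : 2 * L * curveAvg k₂ k₃ L (fun p => g p) = I₀ := by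
    show 2 * L * ((1 / (2 * L)) * ∫ x in (-L)..L, g (x, k₂ * x ^ 2, k₃ * x ^ 3)) = I₀
    rw [hI₀def]
    field_simp
    simp only [hφdef, mul_comm]
  have hG1 : 2 * L * curveAvg k₂ k₃ L (fun p => g p * p.2.1) = k₂ * I₂ := by
    show 2 * L * ((1 / (2 * L)) * ∫ x in (-L)..L,
      g (x, k₂ * x ^ 2, k₃ * x ^ 3) * (k₂ * x ^ 2)) = k₂ * I₂
    rw [show (fun x : ℝ => g (x, k₂ * x ^ 2, k₃ * x ^ 3) * (k₂ * x ^ 2))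
      = fun x : ℝ => k₂ * (x ^ 2 * φ x) from funext fun x => by rw [hφdef]; ring]
    rw [intervalIntegral.integral_const_mul, hI₂def]
    field_simp
  -- solve the system
  obtain ⟨e1, e2⟩ := hLsys
  have e1' : 2 * L * (k₂^2 * L^4 / 5 * w L + k₂ * L^2 / 3 * b L) = k₂ * I₂ := by
    rw [← hA1, ← hA2, e1]; exact hG1
  have e2' : 2 * L * (k₂ * L^2 / 3 * w L + b L) = I₀ := by
    rw [← hA1, e2]; exact hG0
  have hw' : 8/45 * k₂^2 * L^5 * w L = k₂ * S := by
    rw [hSdef]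
    linear_combination e1' - (k₂ * L^2 / 3) * e2'
  have h8 : (8 * k₂ * L^5) ≠ 0 :=
    mul_ne_zero (mul_ne_zero (by norm_num) hk₂) (pow_ne_zero _ hLne)
  have hwv : w L = 45 * S / (8 * k₂ * L^5) := by
    rw [eq_div_iff h8]
    apply mul_left_cancel₀ hk₂
    linear_combination 45 * hw'
  have hwT : w L - T = 45 / (8 * k₂ * L^5) * (S - 8/45 * c 2 * L^5) := by
    rw [hwv, hT]
    field_simp
  calc ‖w L - T‖ = |45 / (8 * k₂ * L^5)| * |S - 8/45 * c 2 * L^5| := by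
        rw [Real.norm_eq_abs, hwT, abs_mul]
    _ ≤ |45 / (8 * k₂ * L^5)| * (Cbig * L^7) :=
        mul_le_mul_of_nonneg_left hSest (abs_nonneg _)
    _ = 45 * Cbig / (8 * |k₂|) * ‖L^2‖ := by
        rw [Real.norm_eq_abs, abs_div, abs_mul, abs_mul, abs_pow, abs_pow,
          abs_of_pos hLpos, abs_of_nonneg (by norm_num : (0:ℝ) ≤ 45),
          abs_of_nonneg (by norm_num : (0:ℝ) ≤ 8)]
        have hak : |k₂| ≠ 0 := abs_ne_zero.2 hk₂
        field_simp
end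

section
/- Let k₂, k₃ be nonzero real numbers and let g : ℝ³ → ℝ be C^∞ on a neighborhood of the origin; write points of ℝ³ as (x, y, z). For L > 0 and a function f on the curve, let ⟨f⟩ = (1/(2L)) ∫_{−L}^{L} f(x, k₂x², k₃x³) dx. For each small L > 0, let (w_x(L), w_z(L)) be the unique solution of the 2×2 linear system [[⟨x²⟩, ⟨xz⟩], [⟨xz⟩, ⟨z²⟩]]·(w_x, w_z)ᵀ = (⟨g x⟩, ⟨g z⟩)ᵀ, where z denotes the function x ↦ k₃x³. Then as L → 0⁺: w_z(L) = (∂g/∂z)(0) + (k₂/k₃)·(∂²g/∂x∂y)(0) + (1/(6k₃))·(∂³g/∂x³)(0) + O(L²). -/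
open MeasureTheory Filter Asymptotics Topology intervalIntegral

section auxLemmas
open Set Finset


lemma my_taylor_bound : ∀ (n : ℕ) (f : ℝ → ℝ), ContDiffAt ℝ ((n+1 : ℕ) : WithTop ℕ∞) f 0 →
    ∃ C > 0, ∃ δ > 0, ∀ x : ℝ, |x| ≤ δ →
      |f x - ∑ k ∈ Finset.range (n+1), iteratedDeriv k f 0 / (k.factorial : ℝ) * x ^ k|
        ≤ C * |x| ^ (n+1) := by
  intro n
  induction n with
  | zero =>
    intro f hf
    obtain ⟨K, t, ht, hK⟩ :=
      (hf.of_le (by norm_num) : ContDiffAt ℝ 1 f 0).exists_lipschitzOnWith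
    obtain ⟨ε, hε, hball⟩ := Metric.mem_nhds_iff.1 ht
    refine ⟨K + 1, by positivity, ε/2, by positivity, fun x hx => ?_⟩
    have hx0 : x ∈ t := hball (by
      simpa [Metric.mem_ball, Real.norm_eq_abs] using lt_of_le_of_lt hx (by linarith))
    have h00 : (0:ℝ) ∈ t := hball (by simp [Metric.mem_ball, hε])
    have h1 := hK.norm_sub_le hx0 h00
    rw [Finset.sum_range_one]
    simp only [iteratedDeriv_zero, pow_zero, mul_one, Nat.factorial_zero, Nat.cast_one, div_one,
      sub_zero, Real.norm_eq_abs] at h1 ⊢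
    calc |f x - f 0| ≤ K * |x| := h1
    _ ≤ (K+1) * |x| ^ (0+1) := by
        rw [pow_one]
        have : (K:ℝ) ≤ K + 1 := by linarith
        exact mul_le_mul_of_nonneg_right this (abs_nonneg x)
  | succ n IH =>
    intro f hf
    obtain ⟨u, hu, hfu⟩ := hf.contDiffOn (le_refl _) (by norm_num)
    obtain ⟨ε, hε, hball⟩ := Metric.mem_nhds_iff.1 hu
    have hfb : ContDiffOn ℝ ((n+2 : ℕ) : WithTop ℕ∞) f (Metric.ball 0 ε) := hfu.mono hball
    have hdf : ContDiffOn ℝ ((n+1 : ℕ) : WithTop ℕ∞) (deriv f) (Metric.ball 0 ε) :=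
      hfb.deriv_of_isOpen Metric.isOpen_ball (by norm_cast)
    have hdfat : ContDiffAt ℝ ((n+1 : ℕ) : WithTop ℕ∞) (deriv f) 0 :=
      hdf.contDiffAt (Metric.isOpen_ball.mem_nhds (by simp [hε]))
    obtain ⟨C₁, hC₁, δ₁, hδ₁, hIH⟩ := IH (deriv f) hdfat
    set δ := min δ₁ (ε/2) with hδdef
    have hδpos : 0 < δ := lt_min hδ₁ (by linarith)
    refine ⟨C₁, hC₁, δ, hδpos, fun x hx => ?_⟩
    -- the difference function and its derivative
    set a : ℕ → ℝ := fun k => iteratedDeriv k f 0 / (k.factorial : ℝ) with ha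
    set φ : ℝ → ℝ := fun t => f t - ∑ k ∈ Finset.range (n+2), a k * t ^ k with hφ
    have hderiv : ∀ t ∈ Metric.ball (0:ℝ) ε, HasDerivAt φ
        (deriv f t - ∑ k ∈ Finset.range (n+1), iteratedDeriv k (deriv f) 0 / (k.factorial : ℝ) * t ^ k) t := by
      intro t htb
      have hft : HasDerivAt f (deriv f t) t := by
        have : DifferentiableAt ℝ f t :=
          (hfb.contDiffAt (Metric.isOpen_ball.mem_nhds htb)).differentiableAt (by norm_cast)
        exact this.hasDerivAt
      have hpt : HasDerivAt (fun t : ℝ => ∑ k ∈ Finset.range (n+2), a k * t ^ k)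
          (∑ k ∈ Finset.range (n+2), a k * ((k : ℝ) * t ^ (k-1))) t := by
        apply HasDerivAt.fun_sum
        intro k _
        exact (hasDerivAt_pow k t).const_mul (a k)
      have hsum : ∑ k ∈ Finset.range (n+2), a k * ((k : ℝ) * t ^ (k-1))
          = ∑ k ∈ Finset.range (n+1), iteratedDeriv k (deriv f) 0 / (k.factorial : ℝ) * t ^ k := by
        rw [Finset.sum_range_succ']
        simp only [Nat.cast_zero, zero_mul, mul_zero, add_zero]
        apply Finset.sum_congr rfl
        intro k _
        rw [ha]
        simp only [Nat.add_sub_cancel]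
        rw [← iteratedDeriv_succ']
        rw [Nat.factorial_succ]
        push_cast
        have : (k.factorial : ℝ) ≠ 0 := by positivity
        field_simp
      rw [← hsum]
      exact hft.sub hpt
    -- MVT on the segment
    have hφ0 : φ 0 = 0 := by
      rw [hφ]
      simp only []
      rw [Finset.sum_eq_single 0]
      · simp [ha]
      · intro k _ hk; simp [zero_pow hk]
      · intro h; simp at h
    have key : ‖φ x - φ 0‖ ≤ (C₁ * |x| ^ (n+1)) * ‖x - 0‖ := by
      apply Convex.norm_image_sub_le_of_norm_hasDerivWithin_le
        (f' := fun t => deriv f t - ∑ k ∈ Finset.range (n+1), iteratedDeriv k (deriv f) 0 / (k.factorial : ℝ) * t ^ k)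
        (s := Icc (-|x|) (|x|))
      · intro t ht
        have htb : t ∈ Metric.ball (0:ℝ) ε := by
          simp only [Metric.mem_ball, Real.dist_eq, sub_zero]
          rcases ht with ⟨h1, h2⟩
          have : |t| ≤ |x| := abs_le.2 ⟨h1, h2⟩
          calc |t| ≤ |x| := this
          _ ≤ δ := hx
          _ < ε := by rw [hδdef]; exact lt_of_le_of_lt (min_le_right _ _) (by linarith)
        exact (hderiv t htb).hasDerivWithinAt
      · intro t ht
        rcases ht with ⟨h1, h2⟩
        have habs : |t| ≤ |x| := abs_le.2 ⟨h1, h2⟩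
        have := hIH t (le_trans habs (le_trans hx (min_le_left _ _)))
        rw [Real.norm_eq_abs]
        calc _ ≤ C₁ * |t| ^ (n+1) := this
        _ ≤ C₁ * |x| ^ (n+1) := by
            apply mul_le_mul_of_nonneg_left _ (le_of_lt hC₁)
            exact pow_le_pow_left₀ (abs_nonneg t) habs _
      · exact convex_Icc _ _
      · exact ⟨neg_nonpos.2 (abs_nonneg x), abs_nonneg x⟩
      · exact ⟨neg_abs_le x, le_abs_self x⟩
    rw [hφ0, sub_zero, Real.norm_eq_abs, Real.norm_eq_abs, sub_zero] at key
    calc |φ x| ≤ C₁ * |x| ^ (n+1) * |x| := key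
    _ = C₁ * |x| ^ (n+1+1) := by ring


lemma my_third_deriv (k₂ k₃ : ℝ) (g : ℝ × ℝ × ℝ → ℝ) (hg : ContDiffAt ℝ (⊤ : ℕ∞) g 0) :
    iteratedDeriv 3 (fun x : ℝ => g (x, k₂ * x ^ 2, k₃ * x ^ 3)) 0 =
      6 * k₃ * fderiv ℝ g 0 ((0:ℝ), (0:ℝ), (1:ℝ))
      + 6 * k₂ * iteratedFDeriv ℝ 2 g 0 ![((1:ℝ),(0:ℝ),(0:ℝ)), ((0:ℝ),(1:ℝ),(0:ℝ))]
      + iteratedFDeriv ℝ 3 g 0 (fun _ => ((1:ℝ),(0:ℝ),(0:ℝ))) := by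
  -- smoothness on a ball
  obtain ⟨u, hu, hgu⟩ := (hg.of_le (WithTop.coe_le_coe.2 le_top : ((5:ℕ) : WithTop ℕ∞) ≤ ((⊤ : ℕ∞) : WithTop ℕ∞))).contDiffOn
    (le_refl _) (by norm_num)
  obtain ⟨ε, hε, hball⟩ := Metric.mem_nhds_iff.1 hu
  have hgb : ContDiffOn ℝ ((5:ℕ) : WithTop ℕ∞) g (Metric.ball 0 ε) := hgu.mono hball
  set G₁ := fderiv ℝ g with hG₁
  set G₂ := fderiv ℝ G₁ with hG₂
  set G₃ := fderiv ℝ G₂ with hG₃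
  have hG₁b : ContDiffOn ℝ ((4:ℕ) : WithTop ℕ∞) G₁ (Metric.ball 0 ε) :=
    hgb.fderiv_of_isOpen Metric.isOpen_ball (by norm_cast)
  have hG₂b : ContDiffOn ℝ ((3:ℕ) : WithTop ℕ∞) G₂ (Metric.ball 0 ε) :=
    hG₁b.fderiv_of_isOpen Metric.isOpen_ball (by norm_cast)
  -- the curve
  set c : ℝ → ℝ × ℝ × ℝ := fun x => (x, k₂ * x ^ 2, k₃ * x ^ 3) with hc
  set c1 : ℝ → ℝ × ℝ × ℝ := fun x => (1, k₂ * (2 * x), k₃ * (3 * x ^ 2)) with hc1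
  set c2 : ℝ → ℝ × ℝ × ℝ := fun x => (0, k₂ * 2, k₃ * (3 * (2 * x))) with hc2
  have hcd : ∀ x : ℝ, HasDerivAt c (c1 x) x := by
    intro x
    apply HasDerivAt.prodMk (hasDerivAt_id x)
    apply HasDerivAt.prodMk
    · simpa using ((hasDerivAt_pow 2 x).const_mul k₂)
    · simpa using ((hasDerivAt_pow 3 x).const_mul k₃)
  have hc1d : ∀ x : ℝ, HasDerivAt c1 (c2 x) x := by
    intro x
    apply HasDerivAt.prodMk (hasDerivAt_const x 1)
    apply HasDerivAt.prodMk
    · simpa using (hasDerivAt_id x).const_mul (k₂ * 2) |>.congr_deriv (by ring) |>.congr_of_eventuallyEq (by filter_upwards with y; simp only [id]; ring)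
    · have : HasDerivAt (fun x : ℝ => 3 * x ^ 2) (3 * (2 * x)) x := by
        simpa using ((hasDerivAt_pow 2 x).const_mul 3)
      simpa [mul_assoc] using this.const_mul k₃
  have hc2d : ∀ x : ℝ, HasDerivAt c2 ((0, 0, k₃ * 6) : ℝ × ℝ × ℝ) x := by
    intro x
    apply HasDerivAt.prodMk (hasDerivAt_const x 0)
    apply HasDerivAt.prodMk (hasDerivAt_const x (k₂ * 2))
    have h6 : HasDerivAt (fun x : ℝ => k₃ * (3 * (2 * x))) (k₃ * 6) x := by
      have := (hasDerivAt_id x).const_mul (k₃ * 6)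
      apply this.congr_deriv (by ring) |>.congr_of_eventuallyEq (by filter_upwards with y; simp only [id]; ring)
    exact h6
  -- points near 0 map into the ball
  have hc0 : c 0 = (0 : ℝ × ℝ × ℝ) := by simp [hc, Prod.ext_iff]
  have hcc : ContinuousAt c 0 := (hcd 0).continuousAt
  have hmem : ∀ᶠ x in 𝓝 (0:ℝ), c x ∈ Metric.ball (0 : ℝ × ℝ × ℝ) ε := by
    have : Metric.ball (0 : ℝ × ℝ × ℝ) ε ∈ 𝓝 (c 0) := by
      rw [hc0]; exact Metric.ball_mem_nhds _ hε
    exact hcc this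
  set h : ℝ → ℝ := fun x => g (c x) with hh
  set φ₁ : ℝ → ℝ := fun x => G₁ (c x) (c1 x) with hφ₁
  set φ₂ : ℝ → ℝ := fun x => G₂ (c x) (c1 x) (c1 x) + G₁ (c x) (c2 x) with hφ₂
  have hGat : ∀ p ∈ Metric.ball (0 : ℝ × ℝ × ℝ) ε, HasFDerivAt g (G₁ p) p := by
    intro p hp
    exact ((hgb.contDiffAt (Metric.isOpen_ball.mem_nhds hp)).differentiableAt
      (by norm_cast)).hasFDerivAt
  have hG1at : ∀ p ∈ Metric.ball (0 : ℝ × ℝ × ℝ) ε, HasFDerivAt G₁ (G₂ p) p := by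
    intro p hp
    exact ((hG₁b.contDiffAt (Metric.isOpen_ball.mem_nhds hp)).differentiableAt
      (by norm_cast)).hasFDerivAt
  have h0b : (0 : ℝ × ℝ × ℝ) ∈ Metric.ball (0 : ℝ × ℝ × ℝ) ε := by simp [hε]
  have hG2at : HasFDerivAt G₂ (G₃ 0) 0 :=
    ((hG₂b.contDiffAt (Metric.isOpen_ball.mem_nhds h0b)).differentiableAt
      (by norm_cast)).hasFDerivAt
  have hd1 : ∀ᶠ x in 𝓝 (0:ℝ), HasDerivAt h (φ₁ x) x := by
    filter_upwards [hmem] with x hx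
    exact (hGat (c x) hx).comp_hasDerivAt x (hcd x)
  have hd2 : ∀ᶠ x in 𝓝 (0:ℝ), HasDerivAt φ₁ (φ₂ x) x := by
    filter_upwards [hmem] with x hx
    have hA : HasDerivAt (fun y => G₁ (c y)) (G₂ (c x) (c1 x)) x :=
      (hG1at (c x) hx).comp_hasDerivAt x (hcd x)
    exact hA.clm_apply (hc1d x)
  have hd3 : HasDerivAt φ₂
      (((G₃ 0 (c1 0) (c1 0) + G₂ (c 0) (c2 0)) (c1 0) + (G₂ (c 0) (c1 0)) (c2 0))
        + ((G₂ (c 0) (c1 0)) (c2 0) + G₁ (c 0) ((0, 0, k₃ * 6) : ℝ × ℝ × ℝ))) 0 := by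
    have hB : HasDerivAt (fun y => G₂ (c y)) (G₃ 0 (c1 0)) 0 := by
      have h' : HasFDerivAt G₂ (G₃ 0) (c 0) := by rw [hc0]; exact hG2at
      exact HasFDerivAt.comp_hasDerivAt (l := G₂) (0:ℝ) h' (hcd 0)
    have hB1 : HasDerivAt (fun y => G₂ (c y) (c1 y))
        (G₃ 0 (c1 0) (c1 0) + G₂ (c 0) (c2 0)) 0 := hB.clm_apply (hc1d 0)
    have hB2 : HasDerivAt (fun y => G₂ (c y) (c1 y) (c1 y))
        ((G₃ 0 (c1 0) (c1 0) + G₂ (c 0) (c2 0)) (c1 0) + (G₂ (c 0) (c1 0)) (c2 0)) 0 :=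
      hB1.clm_apply (hc1d 0)
    have hA : HasDerivAt (fun y => G₁ (c y)) (G₂ (c 0) (c1 0)) 0 := by
      have := hG1at (c 0) (by rw [hc0]; exact h0b)
      exact this.comp_hasDerivAt (0:ℝ) (hcd 0)
    have hA2 : HasDerivAt (fun y => G₁ (c y) (c2 y))
        ((G₂ (c 0) (c1 0)) (c2 0) + G₁ (c 0) ((0, 0, k₃ * 6) : ℝ × ℝ × ℝ)) 0 :=
      hA.clm_apply (hc2d 0)
    exact hB2.add hA2
  -- identify iterated derivatives
  have E1 : deriv h =ᶠ[𝓝 (0:ℝ)] φ₁ := by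
    filter_upwards [hd1] with x hx; exact hx.deriv
  have E2 : deriv φ₁ =ᶠ[𝓝 (0:ℝ)] φ₂ := by
    filter_upwards [hd2] with x hx; exact hx.deriv
  have E3 : deriv (deriv h) =ᶠ[𝓝 (0:ℝ)] φ₂ := E1.deriv.trans E2
  have key : deriv (deriv (deriv h)) 0
      = ((G₃ 0 (c1 0) (c1 0) + G₂ (c 0) (c2 0)) (c1 0) + (G₂ (c 0) (c1 0)) (c2 0))
        + ((G₂ (c 0) (c1 0)) (c2 0) + G₁ (c 0) ((0, 0, k₃ * 6) : ℝ × ℝ × ℝ)) := by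
    rw [E3.deriv_eq]
    exact hd3.deriv
  have hit : iteratedDeriv 3 (fun x : ℝ => g (x, k₂ * x ^ 2, k₃ * x ^ 3)) 0
      = deriv (deriv (deriv h)) 0 := by
    have : (fun x : ℝ => g (x, k₂ * x ^ 2, k₃ * x ^ 3)) = h := rfl
    rw [this, show (3:ℕ) = 2+1 from rfl, iteratedDeriv_succ,
      show (2:ℕ) = 1+1 from rfl, iteratedDeriv_succ, iteratedDeriv_one]
  rw [hit, key]
  -- now evaluate at the explicit vectors
  have hc10 : c1 0 = ((1:ℝ),(0:ℝ),(0:ℝ)) := by simp [hc1]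
  have hc20 : c2 0 = (2*k₂) • ((0:ℝ),(1:ℝ),(0:ℝ)) := by
    simp [hc2, Prod.ext_iff, Prod.smul_def]
    ring
  have he3 : ((0:ℝ), (0:ℝ), k₃ * 6) = (k₃*6) • ((0:ℝ),(0:ℝ),(1:ℝ)) := by
    simp [Prod.ext_iff, Prod.smul_def]
  have hsymm : fderiv ℝ (fderiv ℝ g) 0 ((0:ℝ),(1:ℝ),(0:ℝ)) ((1:ℝ),(0:ℝ),(0:ℝ))
      = fderiv ℝ (fderiv ℝ g) 0 ((1:ℝ),(0:ℝ),(0:ℝ)) ((0:ℝ),(1:ℝ),(0:ℝ)) :=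
    (hg.isSymmSndFDerivAt (by simp; exact WithTop.coe_le_coe.2 le_top)) _ _
  have hitf2 : iteratedFDeriv ℝ 2 g 0 ![((1:ℝ),(0:ℝ),(0:ℝ)), ((0:ℝ),(1:ℝ),(0:ℝ))]
      = G₂ 0 ((1:ℝ),(0:ℝ),(0:ℝ)) ((0:ℝ),(1:ℝ),(0:ℝ)) := by
    rw [iteratedFDeriv_two_apply]
    simp [hG₂, hG₁]
  have hitf3 : iteratedFDeriv ℝ 3 g 0 (fun _ => ((1:ℝ),(0:ℝ),(0:ℝ)))
      = G₃ 0 ((1:ℝ),(0:ℝ),(0:ℝ)) ((1:ℝ),(0:ℝ),(0:ℝ)) ((1:ℝ),(0:ℝ),(0:ℝ)) := by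
    rw [show (3:ℕ) = 2+1 from rfl, iteratedFDeriv_succ_apply_right, iteratedFDeriv_two_apply]
    simp [hG₃, hG₂, hG₁, Fin.init]
  rw [hc0, hc10, hc20, he3, hitf2, hitf3]
  simp only [ContinuousLinearMap.map_smul, ContinuousLinearMap.add_apply,
    ContinuousLinearMap.smul_apply, smul_eq_mul]
  rw [← hG₁, ← hG₂] at hsymm
  rw [hsymm]
  ring

lemma mom_xx (k₂ k₃ L : ℝ) : curveAvg k₂ k₃ L (fun p => p.1 ^ 2) = L ^ 2 / 3 * (L / L) := by
  unfold curveAvg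
  simp only []
  rw [integral_pow]
  field_simp
  by_cases hL : L = 0
  · subst hL; simp
  · linear_combination (L ^ 2 * 6) * mul_inv_cancel₀ hL

lemma mom_xz (k₂ k₃ L : ℝ) :
    curveAvg k₂ k₃ L (fun p => p.1 * p.2.2) = k₃ * L ^ 4 / 5 * (L / L) := by
  unfold curveAvg
  simp only []
  have : (fun x : ℝ => x * (k₃ * x ^ 3)) = fun x : ℝ => k₃ * x ^ 4 := by funext x; ring
  rw [this, intervalIntegral.integral_const_mul, integral_pow]
  field_simp
  by_cases hL : L = 0
  · subst hL; simp
  · linear_combination (k₃ * L ^ 4 * 10) * mul_inv_cancel₀ hL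

lemma mom_zz (k₂ k₃ L : ℝ) :
    curveAvg k₂ k₃ L (fun p => p.2.2 ^ 2) = k₃ ^ 2 * L ^ 6 / 7 * (L / L) := by
  unfold curveAvg
  simp only []
  have : (fun x : ℝ => (k₃ * x ^ 3) ^ 2) = fun x : ℝ => k₃ ^ 2 * x ^ 6 := by funext x; ring
  rw [this, intervalIntegral.integral_const_mul, integral_pow]
  field_simp
  by_cases hL : L = 0
  · subst hL; simp
  · linear_combination (k₃ ^ 2 * L ^ 6 * 14) * mul_inv_cancel₀ hL

lemma poly_int (a : ℕ → ℝ) (L : ℝ) (m : ℕ) :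
    ∫ x in (-L)..L, (∑ k ∈ Finset.range 5, a k * x ^ k) * x ^ m
      = ∑ k ∈ Finset.range 5, a k * ((L ^ (k+m+1) - (-L) ^ (k+m+1)) / (k+m+1)) := by
  have h1 : ∀ x : ℝ, (∑ k ∈ Finset.range 5, a k * x ^ k) * x ^ m
      = ∑ k ∈ Finset.range 5, a k * x ^ (k+m) := by
    intro x
    rw [Finset.sum_mul]
    exact Finset.sum_congr rfl fun k _ => by rw [mul_assoc, ← pow_add]
  rw [intervalIntegral.integral_congr (g := fun x => ∑ k ∈ Finset.range 5, a k * x ^ (k+m))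
    (fun x _ => h1 x)]
  rw [intervalIntegral.integral_finset_sum (fun k _ =>
    (show Continuous (fun x : ℝ => a k * x ^ (k+m)) from continuous_const.mul (continuous_pow (k+m))).intervalIntegrable _ _)]
  refine Finset.sum_congr rfl fun k _ => ?_
  rw [intervalIntegral.integral_const_mul, integral_pow]
  norm_num

end auxLemmas


/-- for data on the curve `x ↦ (x, k₂x², k₃x³)` in `ℝ³` with labels `g`,
if `(w_x(L), w_z(L))` solves the 2×2 normal equations
`[[⟨x²⟩, ⟨xz⟩], [⟨xz⟩, ⟨z²⟩]]·(w_x, w_z)ᵀ = (⟨g x⟩, ⟨g z⟩)ᵀ` for all small `L > 0`,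
then `w_z(L) = (∂g/∂z)(0) + (k₂/k₃)(∂²g/∂x∂y)(0) + (1/(6k₃))(∂³g/∂x³)(0) + O(L²)`
as `L → 0⁺`. -/
theorem stmt_13 (k₂ k₃ : ℝ) (hk₂ : k₂ ≠ 0) (hk₃ : k₃ ≠ 0)
    (g : ℝ × ℝ × ℝ → ℝ) (hg : ContDiffAt ℝ (⊤ : ℕ∞) g 0)
    (wx wz : ℝ → ℝ)
    (hsys : ∀ᶠ L in 𝓝[>] (0 : ℝ),
      curveAvg k₂ k₃ L (fun p => p.1 ^ 2) * wx L
          + curveAvg k₂ k₃ L (fun p => p.1 * p.2.2) * wz L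
        = curveAvg k₂ k₃ L (fun p => g p * p.1) ∧
      curveAvg k₂ k₃ L (fun p => p.1 * p.2.2) * wx L
          + curveAvg k₂ k₃ L (fun p => p.2.2 ^ 2) * wz L
        = curveAvg k₂ k₃ L (fun p => g p * p.2.2)) :
    (fun L : ℝ =>
        wz L - (fderiv ℝ g 0 ((0 : ℝ), (0 : ℝ), (1 : ℝ))
          + k₂ / k₃
            * iteratedFDeriv ℝ 2 g 0
                ![((1 : ℝ), (0 : ℝ), (0 : ℝ)), ((0 : ℝ), (1 : ℝ), (0 : ℝ))]
          + 1 / (6 * k₃)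
            * iteratedFDeriv ℝ 3 g 0 (fun _ => ((1 : ℝ), (0 : ℝ), (0 : ℝ)))))
      =O[𝓝[>] (0 : ℝ)] fun L => L ^ 2 := by
  set A : ℝ := fderiv ℝ g 0 ((0 : ℝ), (0 : ℝ), (1 : ℝ))
      + k₂ / k₃ * iteratedFDeriv ℝ 2 g 0 ![((1:ℝ),(0:ℝ),(0:ℝ)), ((0:ℝ),(1:ℝ),(0:ℝ))]
      + 1 / (6 * k₃) * iteratedFDeriv ℝ 3 g 0 (fun _ => ((1:ℝ),(0:ℝ),(0:ℝ))) with hAdef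
  set h : ℝ → ℝ := fun x => g (x, k₂ * x ^ 2, k₃ * x ^ 3) with hhdef
  -- smoothness of h
  have hcurve : ContDiff ℝ ((5:ℕ) : WithTop ℕ∞) (fun x : ℝ => (x, k₂ * x ^ 2, k₃ * x ^ 3)) := by
    apply ContDiff.prodMk contDiff_id
    apply ContDiff.prodMk
    · exact contDiff_const.mul (contDiff_id.pow 2)
    · exact contDiff_const.mul (contDiff_id.pow 3)
  have hh5 : ContDiffAt ℝ ((5:ℕ) : WithTop ℕ∞) h 0 := by
    have hg5 : ContDiffAt ℝ ((5:ℕ) : WithTop ℕ∞) g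
        ((fun x : ℝ => (x, k₂ * x ^ 2, k₃ * x ^ 3)) 0) := by
      have : (fun x : ℝ => (x, k₂ * x ^ 2, k₃ * x ^ 3)) 0 = (0 : ℝ × ℝ × ℝ) := by
        simp [Prod.ext_iff]
      rw [this]; exact hg.of_le (WithTop.coe_le_coe.2 le_top)
    exact hg5.comp 0 hcurve.contDiffAt
  -- Taylor coefficients of h
  set a : ℕ → ℝ := fun k => iteratedDeriv k h 0 / (k.factorial : ℝ) with hadef
  have ha3 : a 3 = k₃ * A := by
    have h3 := my_third_deriv k₂ k₃ g hg
    rw [← hhdef] at h3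
    have ha36 : a 3 = iteratedDeriv 3 h 0 / 6 := by
      rw [hadef]
      norm_num [Nat.factorial]
    rw [ha36, h3, hAdef]
    field_simp
  -- Taylor remainder bound
  obtain ⟨C, hC, δ, hδ, hTB⟩ := my_taylor_bound 4 h hh5
  set P : ℝ → ℝ := fun x => ∑ k ∈ Finset.range 5, a k * x ^ k with hPdef
  have contP : Continuous P := by
    apply continuous_finset_sum
    intro k _
    exact continuous_const.mul (continuous_pow k)
  -- continuity of h near 0
  obtain ⟨u, hu, hu5⟩ := hh5.contDiffOn (le_refl _) (by norm_num)
  obtain ⟨ε, hε, hball⟩ := Metric.mem_nhds_iff.1 hu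
  have hcont : ContinuousOn h (Metric.ball 0 ε) := (hu5.mono hball).continuousOn
  -- the bound
  rw [Asymptotics.isBigO_iff]
  refine ⟨70 * C / |k₃|, ?_⟩
  have hd : (0:ℝ) < min δ (ε/2) := lt_min hδ (by linarith)
  filter_upwards [hsys, Ioo_mem_nhdsGT_of_mem (Set.mem_Ico.2 ⟨le_refl (0:ℝ), hd⟩)]
    with L hLsys hLmem
  obtain ⟨hL, hLd⟩ := hLmem
  have hLδ : L ≤ δ := le_trans (le_of_lt hLd) (min_le_left _ _)
  have hLε : L < ε := lt_of_lt_of_le hLd (le_trans (min_le_right _ _) (by linarith))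
  have hL0 : L ≠ 0 := ne_of_gt hL
  have hnegL : -L ≤ L := by linarith
  -- basic integrability and splitting facts
  have hsubIcc : Set.uIcc (-L) L ⊆ Metric.ball (0:ℝ) ε := by
    intro x hx
    rw [Set.uIcc_of_le hnegL] at hx
    simp only [Metric.mem_ball, Real.dist_eq, sub_zero]
    exact lt_of_le_of_lt (abs_le.2 ⟨hx.1, hx.2⟩) hLε
  have hIcont : ∀ m : ℕ, IntervalIntegrable (fun x => (h x - P x) * x ^ m) volume (-L) L := by
    intro m
    apply ContinuousOn.intervalIntegrable
    exact (((hcont.mono hsubIcc).sub contP.continuousOn).mul (continuous_pow m).continuousOn)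
  have hIconth : ∀ m : ℕ, IntervalIntegrable (fun x => h x * x ^ m) volume (-L) L := by
    intro m
    apply ContinuousOn.intervalIntegrable
    exact ((hcont.mono hsubIcc).mul (continuous_pow m).continuousOn)
  have hsplit : ∀ m : ℕ, (∫ x in (-L)..L, h x * x ^ m)
      = (∫ x in (-L)..L, (h x - P x) * x ^ m)
        + ∑ k ∈ Finset.range 5, a k * ((L ^ (k+m+1) - (-L) ^ (k+m+1)) / (k+m+1)) := by
    intro m
    rw [← poly_int a L m, ← intervalIntegral.integral_add (hIcont m)
      ((show Continuous (fun x : ℝ => (∑ k ∈ Finset.range 5, a k * x ^ k) * x ^ m) from contP.mul (continuous_pow m)).intervalIntegrable _ _)]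
    apply intervalIntegral.integral_congr
    intro x _
    ring
  have hRb : ∀ m : ℕ, |∫ x in (-L)..L, (h x - P x) * x ^ m| ≤ 2 * C * L ^ (6+m) := by
    intro m
    have hb := intervalIntegral.norm_integral_le_of_norm_le_const
      (C := C * L ^ 5 * L ^ m) (f := fun x => (h x - P x) * x ^ m) (a := -L) (b := L) ?_
    · rw [Real.norm_eq_abs] at hb
      calc |∫ x in (-L)..L, (h x - P x) * x ^ m| ≤ C * L ^ 5 * L ^ m * |L - (-L)| := hb
      _ = 2 * C * L ^ (6+m) := by
          rw [abs_of_pos (by linarith : (0:ℝ) < L - (-L)), pow_add]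
          ring
    · intro x hx
      rw [Set.uIoc_of_le hnegL] at hx
      have hxL : |x| ≤ L := abs_le.2 ⟨le_of_lt hx.1, hx.2⟩
      have hxδ : |x| ≤ δ := le_trans hxL hLδ
      rw [Real.norm_eq_abs, abs_mul, abs_pow]
      have h1 : |h x - P x| ≤ C * L ^ 5 := by
        refine le_trans (hTB x hxδ) ?_
        have h5 : |x| ^ (4+1) ≤ L ^ 5 := by
          norm_num
          exact pow_le_pow_left₀ (abs_nonneg x) hxL 5
        exact mul_le_mul_of_nonneg_left h5 hC.le
      have h2 : |x| ^ m ≤ L ^ m := pow_le_pow_left₀ (abs_nonneg x) hxL m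
      apply mul_le_mul h1 h2 (by positivity) (by positivity)
  -- rewrite the system
  have havg1 : curveAvg k₂ k₃ L (fun p => g p * p.1)
      = (1/(2*L)) * ∫ x in (-L)..L, h x * x ^ 1 := by
    unfold curveAvg
    congr 1
    apply intervalIntegral.integral_congr
    intro x _
    simp [hhdef]
  have havg2 : curveAvg k₂ k₃ L (fun p => g p * p.2.2)
      = (k₃/(2*L)) * ∫ x in (-L)..L, h x * x ^ 3 := by
    unfold curveAvg
    have hpull : (∫ x in (-L)..L, (fun p => g p * p.2.2) (x, k₂ * x ^ 2, k₃ * x ^ 3))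
        = k₃ * ∫ x in (-L)..L, h x * x ^ 3 := by
      rw [← intervalIntegral.integral_const_mul]
      apply intervalIntegral.integral_congr
      intro x _
      simp only [hhdef]
      ring
    rw [hpull]
    ring
  rw [mom_xx, mom_xz, mom_zz, havg1, havg2, div_self hL0, mul_one, mul_one, mul_one] at hLsys
  obtain ⟨eq1, eq2⟩ := hLsys
  -- named residuals
  set R₁ : ℝ := ∫ x in (-L)..L, (h x - P x) * x ^ 1 with hR₁def
  set R₃ : ℝ := ∫ x in (-L)..L, (h x - P x) * x ^ 3 with hR₃def
  set r₁ : ℝ := (1/(2*L)) * R₁ with hr₁def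
  set r₂ : ℝ := (k₃/(2*L)) * R₃ with hr₂def
  have hS1 : (∫ x in (-L)..L, h x * x ^ 1) = R₁ + (a 1 * (2/3*L^3) + a 3 * (2/5*L^5)) := by
    rw [hsplit 1]
    congr 1
    simp [Finset.sum_range_succ]
    ring
  have hS3 : (∫ x in (-L)..L, h x * x ^ 3) = R₃ + (a 1 * (2/5*L^5) + a 3 * (2/7*L^7)) := by
    rw [hsplit 3]
    congr 1
    simp [Finset.sum_range_succ]
    ring
  rw [hS1] at eq1
  rw [hS3] at eq2
  -- put in residual form
  have eq1A : L^2/3 * wx L + k₃ * L^4/5 * wz L = r₁ + a 1 * L^2/3 + a 3 * L^4/5 := by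
    rw [eq1, hr₁def]
    field_simp
    ring
  have eq2A : k₃ * L^4/5 * wx L + k₃^2 * L^6/7 * wz L
      = r₂ + k₃ * a 1 * L^4/5 + k₃ * a 3 * L^6/7 := by
    rw [eq2, hr₂def]
    field_simp
    ring
  have h3 : (4*k₃^2*L^8/525) * (wz L - A) = (L^2/3)*r₂ - (k₃*L^4/5)*r₁ := by
    linear_combination (L^2/3) * eq2A - (k₃*L^4/5) * eq1A + (4*k₃*L^8/525) * ha3
  -- residual bounds
  have hr₁b : |r₁| ≤ C * L^6 := by
    rw [hr₁def, abs_mul, abs_of_pos (by positivity : (0:ℝ) < 1/(2*L))]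
    have := hRb 1
    rw [← hR₁def] at this
    calc 1/(2*L) * |R₁| ≤ 1/(2*L) * (2*C*L^(6+1)) := by
          apply mul_le_mul_of_nonneg_left this (by positivity)
    _ = C * L^6 := by field_simp
  have hr₂b : |r₂| ≤ |k₃| * C * L^8 := by
    rw [hr₂def, abs_mul, abs_div]
    have := hRb 3
    rw [← hR₃def] at this
    rw [abs_of_pos (by positivity : (0:ℝ) < 2*L)]
    calc |k₃|/(2*L) * |R₃| ≤ |k₃|/(2*L) * (2*C*L^(6+3)) := by
          apply mul_le_mul_of_nonneg_left this (by positivity)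
    _ = |k₃| * C * L^8 := by field_simp
  -- final bound
  have hk32 : (0:ℝ) < k₃^2 := by
    rw [← sq_abs]
    exact pow_pos (abs_pos.2 hk₃) 2
  have hden : (0:ℝ) < 4*k₃^2*L^8/525 := by positivity
  have hX : wz L - A = ((L^2/3)*r₂ - (k₃*L^4/5)*r₁) / (4*k₃^2*L^8/525) := by
    rw [eq_div_iff hden.ne']
    linear_combination h3
  rw [Real.norm_eq_abs, Real.norm_eq_abs, hX, abs_div, abs_of_pos hden]
  have e2 : |(L^2/3)*r₂| ≤ (L^2/3) * (|k₃| * C * L^8) := by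
    rw [abs_mul, abs_of_pos (show (0:ℝ) < L^2/3 by positivity)]
    exact mul_le_mul_of_nonneg_left hr₂b (by positivity)
  have e1 : |(k₃*L^4/5)*r₁| ≤ (|k₃| * L^4/5) * (C * L^6) := by
    rw [abs_mul]
    have heq : |k₃*L^4/5| = |k₃| * L^4/5 := by
      rw [abs_div, abs_mul, abs_pow, abs_of_pos hL]
      norm_num
    rw [heq]
    exact mul_le_mul_of_nonneg_left hr₁b (by positivity)
  have hnum : |(L^2/3)*r₂ - (k₃*L^4/5)*r₁| ≤ (8/15) * |k₃| * C * L^10 := by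
    calc |(L^2/3)*r₂ - (k₃*L^4/5)*r₁| ≤ |(L^2/3)*r₂| + |(k₃*L^4/5)*r₁| := abs_sub _ _
    _ ≤ (L^2/3) * (|k₃| * C * L^8) + (|k₃| * L^4/5) * (C * L^6) := add_le_add e2 e1
    _ = (8/15) * |k₃| * C * L^10 := by ring
  calc |(L^2/3)*r₂ - (k₃*L^4/5)*r₁| / (4*k₃^2*L^8/525)
      ≤ ((8/15) * |k₃| * C * L^10) / (4*k₃^2*L^8/525) := by gcongr
  _ = 70 * C / |k₃| * |L^2| := by
      rw [abs_of_pos (by positivity : (0:ℝ) < L^2), ← sq_abs k₃]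
      have : |k₃| ≠ 0 := abs_ne_zero.2 hk₃
      field_simp
      ring
end

section
/- Let k₂, k₃ be nonzero real numbers and let g : ℝ³ → ℝ be C^∞ on a neighborhood of the origin; write points of ℝ³ as (x, y, z). For L > 0 and a function f on the curve, let ⟨f⟩ = (1/(2L)) ∫_{−L}^{L} f(x, k₂x², k₃x³) dx. For each small L > 0, let (w_x(L), w_z(L)) solve [[⟨x²⟩, ⟨xz⟩], [⟨xz⟩, ⟨z²⟩]]·(w_x, w_z)ᵀ = (⟨g x⟩, ⟨g z⟩)ᵀ and let (w_y(L), b(L)) solve [[⟨y²⟩, ⟨y⟩], [⟨y⟩, 1]]·(w_y, b)ᵀ = (⟨g y⟩, ⟨g⟩)ᵀ, where y and z denote the functions x ↦ k₂x² and x ↦ k₃x³. Then as L → 0⁺: w_x(L) = (∂g/∂x)(0) + O(L⁴) and b(L) = g(0) + O(L⁴). -/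
open MeasureTheory Filter Asymptotics Topology intervalIntegral

open Set in

lemma stmt14_taylor (δ δ' : ℝ) (hδ : 0 < δ) (hδδ' : δ < δ') :
    ∀ (n : ℕ) (f : ℝ → ℝ), ContDiffOn ℝ (n+1 : ℕ) f (Ioo (-δ') δ') →
    ∃ (a : ℕ → ℝ) (C : ℝ), 0 < C ∧ ∀ x ∈ Icc (-δ) δ,
      |f x - ∑ i ∈ Finset.range (n+1), a i * x^i| ≤ C * |x|^(n+1) := by
  have hop : IsOpen (Ioo (-δ') δ' : Set ℝ) := isOpen_Ioo
  have hsub : Icc (-δ) δ ⊆ Ioo (-δ') δ' := fun x hx => by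
    simp only [mem_Icc] at hx; exact ⟨by linarith [hx.1], by linarith [hx.2]⟩
  have h0mem : (0:ℝ) ∈ Icc (-δ) δ := ⟨by linarith, by linarith⟩
  have habs : ∀ x : ℝ, ∀ t ∈ Set.uIcc (0:ℝ) x, |t| ≤ |x| := by
    intro x t ht
    rcases Set.mem_uIcc.1 ht with ⟨h1, h2⟩ | ⟨h1, h2⟩ <;> rw [abs_le] <;>
      constructor <;> nlinarith [le_abs_self x, neg_abs_le x]
  have huIcc : ∀ x ∈ Icc (-δ) δ, Set.uIcc (0:ℝ) x ⊆ Icc (-δ) δ := by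
    intro x hx t ht
    have h2 : |x| ≤ δ := abs_le.2 ⟨hx.1, hx.2⟩
    exact Set.mem_Icc.2 (abs_le.1 ((habs x t ht).trans h2))
  intro n
  induction n with
  | zero =>
    intro f hf
    have hderiv : ∀ x ∈ Icc (-δ) δ, HasDerivAt f (deriv f x) x := fun x hx =>
      ((hf.differentiableOn (by norm_num)).differentiableAt (hop.mem_nhds (hsub hx))).hasDerivAt
    have hcont : ContinuousOn (deriv f) (Icc (-δ) δ) :=
      (hf.continuousOn_deriv_of_isOpen hop (by norm_num)).mono hsub
    obtain ⟨M, hM⟩ := isCompact_Icc.exists_bound_of_continuousOn hcont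
    refine ⟨fun _ => f 0, |M| + 1, by positivity, ?_⟩
    intro x hx
    have key := Convex.norm_image_sub_le_of_norm_hasDerivWithin_le
      (f := f) (f' := deriv f) (s := Icc (-δ) δ) (C := |M| + 1)
      (fun t ht => (hderiv t ht).hasDerivWithinAt)
      (fun t ht => le_trans (hM t ht) (by linarith [le_abs_self M])) (convex_Icc _ _) h0mem hx
    simpa using key
  | succ n ih =>
    intro f hf
    have hdf : ContDiffOn ℝ (n+1 : ℕ) (deriv f) (Ioo (-δ') δ') :=
      hf.deriv_of_isOpen hop (by exact_mod_cast le_refl _)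
    obtain ⟨b, Cb, hCb, hball⟩ := ih (deriv f) hdf
    have hderiv : ∀ x ∈ Icc (-δ) δ, HasDerivAt f (deriv f x) x := fun x hx =>
      ((hf.differentiableOn (by norm_num)).differentiableAt (hop.mem_nhds (hsub hx))).hasDerivAt
    set a : ℕ → ℝ := fun i => if i = 0 then f 0 else b (i-1) / i with ha
    refine ⟨a, Cb, hCb, ?_⟩
    set P : ℝ → ℝ := fun y => ∑ i ∈ Finset.range (n+2), a i * y^i with hP
    have hPd : ∀ y : ℝ, HasDerivAt P (∑ i ∈ Finset.range (n+1), b i * y^i) y := by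
      intro y
      have h1 : HasDerivAt P (∑ i ∈ Finset.range (n+2), a i * (i * y^(i-1))) y :=
        HasDerivAt.fun_sum (fun i _ => (hasDerivAt_pow i y).const_mul (a i))
      convert h1 using 1
      symm
      rw [Finset.sum_range_succ']
      simp only [Nat.cast_zero, zero_mul, mul_zero, add_zero]
      refine Finset.sum_congr rfl fun i _ => ?_
      simp only [ha, if_neg (Nat.succ_ne_zero i), Nat.add_sub_cancel]
      have hne : ((i:ℝ)+1) ≠ 0 := by positivity
      push_cast
      field_simp
    have hP0 : P 0 = f 0 := by
      have h2 : P 0 = ∑ i ∈ Finset.range (n+2), a i * (0:ℝ)^i := rfl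
      rw [h2, Finset.sum_eq_single_of_mem 0 (by simp)]
      · simp [ha]
      · intro i _ hi; simp [zero_pow hi]
    intro x hx
    have hud : ∀ t ∈ Set.uIcc (0:ℝ) x, HasDerivWithinAt (fun y => f y - P y)
        (deriv f t - ∑ i ∈ Finset.range (n+1), b i * t^i) (Set.uIcc (0:ℝ) x) t := fun t ht =>
      ((hderiv t (huIcc x hx ht)).sub (hPd t)).hasDerivWithinAt
    have hbd : ∀ t ∈ Set.uIcc (0:ℝ) x, ‖deriv f t - ∑ i ∈ Finset.range (n+1), b i * t^i‖ ≤ Cb * |x|^(n+1) := by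
      intro t ht
      have h1 := hball t (huIcc x hx ht)
      have h2 : |t| ≤ |x| := habs x t ht
      calc ‖deriv f t - ∑ i ∈ Finset.range (n+1), b i * t^i‖ ≤ Cb * |t|^(n+1) := h1
        _ ≤ Cb * |x|^(n+1) := by
            gcongr
    have key := Convex.norm_image_sub_le_of_norm_hasDerivWithin_le hud hbd
      (convex_uIcc _ _) Set.left_mem_uIcc Set.right_mem_uIcc
    rw [hP0] at key
    simp only [sub_self, sub_zero, Real.norm_eq_abs] at key
    show |f x - P x| ≤ Cb * |x|^(n+1+1)
    calc |f x - P x| ≤ Cb * |x|^(n+1) * |x| := key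
      _ = Cb * |x|^(n+1+1) := by ring

open Set in

lemma stmt14_intsplit (h : ℝ → ℝ) (a0 a1 a2 a3 a4 C δ : ℝ) (hC : 0 ≤ C)
    (hcont : ContinuousOn h (Icc (-δ) δ))
    (hb : ∀ x ∈ Icc (-δ) δ, |h x - (a0+a1*x+a2*x^2+a3*x^3+a4*x^4)| ≤ C*|x|^5)
    {L : ℝ} (hL : 0 < L) (hLδ : L ≤ δ) (m : ℕ) :
    ∃ R : ℝ, (∫ x in (-L)..L, h x * x^m)
      = a0*((L^(m+1) - (-L)^(m+1))/((m:ℝ)+1)) + a1*((L^(m+2) - (-L)^(m+2))/((m:ℝ)+2))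
        + a2*((L^(m+3) - (-L)^(m+3))/((m:ℝ)+3)) + a3*((L^(m+4) - (-L)^(m+4))/((m:ℝ)+4))
        + a4*((L^(m+5) - (-L)^(m+5))/((m:ℝ)+5)) + R
      ∧ |R| ≤ 2*C*L^(m+6) := by
  have hIccsub : Icc (-L) L ⊆ Icc (-δ) δ := Icc_subset_Icc (by linarith) hLδ
  have huIcc : Set.uIcc (-L) L = Icc (-L) L := Set.uIcc_of_le (by linarith)
  set P : ℝ → ℝ := fun x => a0+a1*x+a2*x^2+a3*x^3+a4*x^4 with hPdef
  have hPcont : Continuous P := by fun_prop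
  have hint1 : IntervalIntegrable (fun x => (h x - P x) * x^m) volume (-L) L := by
    apply ContinuousOn.intervalIntegrable
    rw [huIcc]
    exact ((hcont.mono hIccsub).sub hPcont.continuousOn).mul (continuous_pow m).continuousOn
  have hint2 : IntervalIntegrable (fun x => P x * x^m) volume (-L) L :=
    Continuous.intervalIntegrable (by fun_prop) _ _
  have key : ∀ (c : ℝ) (k : ℕ), (∫ x in (-L)..L, c * x^k) = c * ((L^(k+1) - (-L)^(k+1))/((k:ℝ)+1)) := by
    intro c k
    rw [intervalIntegral.integral_const_mul, integral_pow]
  refine ⟨∫ x in (-L)..L, (h x - P x) * x^m, ?_, ?_⟩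
  · have hsplit : (∫ x in (-L)..L, h x * x^m)
        = (∫ x in (-L)..L, P x * x^m) + ∫ x in (-L)..L, (h x - P x) * x^m := by
      rw [← intervalIntegral.integral_add hint2 hint1]
      apply intervalIntegral.integral_congr
      intro x _
      ring
    rw [hsplit]
    congr 1
    have hPP : (fun x => P x * x^m)
        = fun x : ℝ => a0*x^m + (a1*x^(m+1) + (a2*x^(m+2) + (a3*x^(m+3) + a4*x^(m+4)))) := by
      funext x; simp only [hPdef]; ring
    rw [hPP,
      intervalIntegral.integral_add (Continuous.intervalIntegrable (by fun_prop) _ _) (Continuous.intervalIntegrable (by fun_prop) _ _),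
      intervalIntegral.integral_add (Continuous.intervalIntegrable (by fun_prop) _ _) (Continuous.intervalIntegrable (by fun_prop) _ _),
      intervalIntegral.integral_add (Continuous.intervalIntegrable (by fun_prop) _ _) (Continuous.intervalIntegrable (by fun_prop) _ _),
      intervalIntegral.integral_add (Continuous.intervalIntegrable (by fun_prop) _ _) (Continuous.intervalIntegrable (by fun_prop) _ _)]
    simp only [key]
    push_cast
    ring
  · have hb2 : ∀ x ∈ Set.uIoc (-L) L, ‖(h x - P x) * x^m‖ ≤ C * L^5 * L^m := by
      intro x hx
      have hx' : x ∈ Icc (-L) L := by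
        rw [Set.uIoc_of_le (by linarith : -L ≤ L)] at hx
        exact Set.Ioc_subset_Icc_self hx
      have hxa : |x| ≤ L := abs_le.2 ⟨hx'.1, hx'.2⟩
      have h1 : |h x - P x| ≤ C * |x|^5 := hb x (hIccsub hx')
      rw [Real.norm_eq_abs, abs_mul, abs_pow]
      have h2 : |x|^5 ≤ L^5 := pow_le_pow_left₀ (abs_nonneg x) hxa 5
      have h3 : |x|^m ≤ L^m := pow_le_pow_left₀ (abs_nonneg x) hxa m
      calc |h x - P x| * |x|^m ≤ (C * L^5) * L^m := by
            apply mul_le_mul (h1.trans (by nlinarith)) h3 (by positivity) (by positivity)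
        _ = C * L^5 * L^m := by ring
    have hfin := intervalIntegral.norm_integral_le_of_norm_le_const hb2
    rw [Real.norm_eq_abs] at hfin
    calc |∫ x in (-L)..L, (h x - P x) * x^m| ≤ C * L^5 * L^m * |L - -L| := hfin
      _ = 2*C*L^(m+6) := by
          rw [show (L - -L) = 2*L by ring, abs_of_pos (by linarith)]
          ring

open Set in

lemma stmt14_deriv (h : ℝ → ℝ) (a0 a1 a2 a3 a4 C δ : ℝ) (hδ : 0 < δ) (hC : 0 ≤ C)
    (hb : ∀ x ∈ Icc (-δ) δ, |h x - (a0+a1*x+a2*x^2+a3*x^3+a4*x^4)| ≤ C*|x|^5) :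
    h 0 = a0 ∧ HasDerivAt h a1 0 := by
  have h00 : h 0 = a0 := by
    have h1 := hb 0 ⟨by linarith, by linarith⟩
    simp only [abs_zero, mul_zero, zero_pow, mul_one, pow_zero] at h1
    have h2 : |h 0 - a0| ≤ 0 := by
      calc |h 0 - a0| = |h 0 - (a0+a1*0+a2*0^2+a3*0^3+a4*0^4)| := by norm_num
        _ ≤ C*|(0:ℝ)|^5 := hb 0 ⟨by linarith, by linarith⟩
        _ = 0 := by simp
    have := abs_nonneg (h 0 - a0)
    have h3 : |h 0 - a0| = 0 := le_antisymm h2 this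
    have := abs_eq_zero.1 h3
    linarith
  refine ⟨h00, ?_⟩
  rw [hasDerivAt_iff_isLittleO]
  simp only [sub_zero, smul_eq_mul]
  have hO : (fun x : ℝ => h x - h 0 - x * a1) =O[nhds 0] (fun x => x^2) := by
    apply Asymptotics.IsBigO.of_bound (|a2|+|a3|+|a4|+C)
    have hev : Icc (-(min δ 1)) (min δ 1) ∈ nhds (0:ℝ) := by
      apply Icc_mem_nhds <;> simp [hδ]
    filter_upwards [hev] with x hx
    have hxm : |x| ≤ min δ 1 := abs_le.2 ⟨hx.1, hx.2⟩
    have hx1 : |x| ≤ 1 := hxm.trans (min_le_right _ _)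
    have hxδ : x ∈ Icc (-δ) δ := by
      have := hxm.trans (min_le_left _ _)
      exact abs_le.1 this
    have hbx := hb x hxδ
    have e1 : h x - h 0 - x * a1
        = (h x - (a0+a1*x+a2*x^2+a3*x^3+a4*x^4)) + (a2*x^2+a3*x^3+a4*x^4) := by
      rw [h00]; ring
    rw [Real.norm_eq_abs, Real.norm_eq_abs, e1]
    have habs0 := abs_nonneg x
    have p3 : |x|^3 ≤ |x|^2 := pow_le_pow_of_le_one habs0 hx1 (by norm_num)
    have p4 : |x|^4 ≤ |x|^2 := pow_le_pow_of_le_one habs0 hx1 (by norm_num)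
    have p5 : |x|^5 ≤ |x|^2 := pow_le_pow_of_le_one habs0 hx1 (by norm_num)
    have hx2 : |x^2| = |x|^2 := abs_pow x 2
    calc |(h x - (a0+a1*x+a2*x^2+a3*x^3+a4*x^4)) + (a2*x^2+a3*x^3+a4*x^4)|
        ≤ |h x - (a0+a1*x+a2*x^2+a3*x^3+a4*x^4)| + |a2*x^2+a3*x^3+a4*x^4| := abs_add_le _ _
      _ ≤ C*|x|^5 + (|a2| * |x| ^ 2 + |a3| * |x| ^ 3 + |a4| * |x| ^ 4) := by
          have := (abs_add_le (a2*x^2+a3*x^3) (a4*x^4)).trans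
            (add_le_add (abs_add_le (a2*x^2) (a3*x^3)) le_rfl)
          simp only [abs_mul, abs_pow] at this
          have h5 : |a2*x^2+a3*x^3+a4*x^4| ≤ |a2| * |x| ^ 2 + |a3| * |x| ^ 3 + |a4| * |x| ^ 4 := by
            calc |a2*x^2+a3*x^3+a4*x^4| ≤ |a2*x^2+a3*x^3| + |a4*x^4| := abs_add_le _ _
              _ ≤ (|a2*x^2| + |a3*x^3|) + |a4*x^4| := by gcongr; exact abs_add_le _ _
              _ = |a2| * |x| ^ 2 + |a3| * |x| ^ 3 + |a4| * |x| ^ 4 := by simp [abs_mul, abs_pow]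
          exact add_le_add hbx h5
      _ ≤ (|a2|+|a3|+|a4|+C) * |x|^2 := by nlinarith [abs_nonneg a2, abs_nonneg a3, abs_nonneg a4]
      _ = (|a2|+|a3|+|a4|+C) * ‖x^2‖ := by rw [Real.norm_eq_abs, hx2]
  have hlo : (fun x : ℝ => x^2) =o[nhds 0] (fun x : ℝ => x) := by
    simpa using Asymptotics.isLittleO_pow_pow (𝕜 := ℝ) (by norm_num : 1 < 2)
  exact hO.trans_isLittleO hlo

open Set in
lemma stmt14_wxbound (k₃ L C a1 a3 E1 E3 wxL wzL : ℝ) (hk₃ : k₃ ≠ 0) (hL : 0 < L) (hC : 0 < C)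
    (e11 : L^2/3 * wxL + k₃*L^4/5 * wzL = a1*L^2/3 + a3*L^4/5 + E1)
    (e12 : k₃*L^4/5 * wxL + k₃^2*L^6/7 * wzL = k₃*(a1*L^4/5 + a3*L^6/7 + E3))
    (hE1 : |E1| ≤ C*L^6) (hE3 : |E3| ≤ C*L^8) :
    |wxL - a1| ≤ 45*C*L^4 := by
  have hk3sq : 0 < k₃^2 := lt_of_le_of_ne (sq_nonneg k₃) (Ne.symm (pow_ne_zero 2 hk₃))
  have hkey : (4*k₃^2*L^8/525) * (wxL - a1) = k₃^2 * (L^6*E1/7 - L^4*E3/5) := by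
    linear_combination (k₃^2*L^6/7) * e11 - (k₃*L^4/5) * e12
  have hden : (0:ℝ) < 4*k₃^2*L^8/525 := by
    have := pow_pos hL 8
    positivity
  have hwxeq : wxL - a1 = (k₃^2 * (L^6*E1/7 - L^4*E3/5)) / (4*k₃^2*L^8/525) := by
    rw [eq_div_iff hden.ne']
    linear_combination hkey
  rw [hwxeq, abs_div, abs_of_pos hden, div_le_iff₀ hden]
  calc |k₃^2 * (L^6*E1/7 - L^4*E3/5)|
      = k₃^2 * |L^6*E1/7 - L^4*E3/5| := by rw [abs_mul, abs_of_nonneg (sq_nonneg k₃)]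
    _ ≤ k₃^2 * (|L^6*E1/7| + |L^4*E3/5|) := by
        gcongr
        rw [sub_eq_add_neg]
        exact (abs_add_le _ _).trans (by rw [abs_neg])
    _ = k₃^2 * (L^6*|E1|/7 + L^4*|E3|/5) := by
        rw [abs_div, abs_div, abs_mul, abs_mul, abs_pow, abs_pow, abs_of_pos hL]
        norm_num
    _ ≤ k₃^2 * (L^6*(C*L^6)/7 + L^4*(C*L^8)/5) := by gcongr
    _ = 45*C*L^4 * (4*k₃^2*L^8/525) := by ring

open Set in
lemma stmt14_bbound (k₂ L C a0 a2 a4 E0 E2 wyL bL : ℝ) (hk₂ : k₂ ≠ 0) (hL : 0 < L) (hL1 : L ≤ 1)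
    (hC : 0 < C)
    (e21 : k₂^2*L^4/5 * wyL + k₂*L^2/3 * bL = k₂*(a0*L^2/3 + a2*L^4/5 + a4*L^6/7 + E2))
    (e22 : k₂*L^2/3 * wyL + bL = a0 + a2*L^2/3 + a4*L^4/5 + E0)
    (hE0 : |E0| ≤ C*L^5) (hE2 : |E2| ≤ C*L^7) :
    |bL - a0| ≤ (|a4| + 6*C)*L^4 := by
  have hk2sq : 0 < k₂^2 := lt_of_le_of_ne (sq_nonneg k₂) (Ne.symm (pow_ne_zero 2 hk₂))
  have hkey : (4*k₂^2*L^4/45) * (bL - a0)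
      = k₂^2 * (-(4/525)*a4*L^8 + L^4*E0/5 - L^2*E2/3) := by
    linear_combination (k₂^2*L^4/5) * e22 - (k₂*L^2/3) * e21
  have hden : (0:ℝ) < 4*k₂^2*L^4/45 := by
    have := pow_pos hL 4
    positivity
  have hbeq : bL - a0 = (k₂^2 * (-(4/525)*a4*L^8 + L^4*E0/5 - L^2*E2/3)) / (4*k₂^2*L^4/45) := by
    rw [eq_div_iff hden.ne']
    linear_combination hkey
  rw [hbeq, abs_div, abs_of_pos hden, div_le_iff₀ hden]
  have htri : |-(4/525)*a4*L^8 + L^4*E0/5 - L^2*E2/3|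
      ≤ |(-(4/525))*a4*L^8| + |L^4*E0/5| + |L^2*E2/3| := by
    refine le_trans ?_ (add_le_add_left (abs_add_le _ _) _)
    rw [sub_eq_add_neg]
    exact (abs_add_le _ _).trans (by rw [abs_neg])
  have b1 : |(-(4/525))*a4*L^8| = (4/525) * |a4| * L^8 := by
    rw [abs_mul, abs_mul, abs_pow, abs_of_pos hL]
    norm_num
  have b2 : |L^4*E0/5| = L^4 * |E0| / 5 := by
    rw [abs_div, abs_mul, abs_pow, abs_of_pos hL]
    norm_num
  have b3 : |L^2*E2/3| = L^2 * |E2| / 3 := by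
    rw [abs_div, abs_mul, abs_pow, abs_of_pos hL]
    norm_num
  have h9 : L^9 ≤ L^8 := pow_le_pow_of_le_one hL.le hL1 (by norm_num)
  calc |k₂^2 * (-(4/525)*a4*L^8 + L^4*E0/5 - L^2*E2/3)|
      = k₂^2 * |-(4/525)*a4*L^8 + L^4*E0/5 - L^2*E2/3| := by
        rw [abs_mul, abs_of_nonneg (sq_nonneg k₂)]
    _ ≤ k₂^2 * (|(-(4/525))*a4*L^8| + |L^4*E0/5| + |L^2*E2/3|) := by gcongr
    _ = k₂^2 * ((4/525) * |a4| * L^8 + L^4 * |E0| / 5 + L^2 * |E2| / 3) := by rw [b1, b2, b3]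
    _ ≤ k₂^2 * ((4/525) * |a4| * L^8 + L^4 * (C*L^5) / 5 + L^2 * (C*L^7) / 3) := by gcongr
    _ ≤ k₂^2 * ((|a4| + 6*C)*L^4 * (4*L^4/45)) := by
        gcongr k₂^2 * ?_
        nlinarith [mul_nonneg (abs_nonneg a4) (pow_pos hL 8).le,
          mul_le_mul_of_nonneg_left h9 hC.le]
    _ = (|a4| + 6*C)*L^4 * (4*k₂^2*L^4/45) := by ring

set_option maxHeartbeats 2000000 in
open Set in
/-- for data on the curve `x ↦ (x, k₂x², k₃x³)` in `ℝ³` with labels `g`,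
if `(w_x(L), w_z(L))` solves `[[⟨x²⟩, ⟨xz⟩], [⟨xz⟩, ⟨z²⟩]]·(w_x, w_z)ᵀ = (⟨gx⟩, ⟨gz⟩)ᵀ`
and `(w_y(L), b(L))` solves `[[⟨y²⟩, ⟨y⟩], [⟨y⟩, 1]]·(w_y, b)ᵀ = (⟨gy⟩, ⟨g⟩)ᵀ` for all
small `L > 0`, then `w_x(L) = (∂g/∂x)(0) + O(L⁴)` and `b(L) = g(0) + O(L⁴)`
as `L → 0⁺`. -/
theorem stmt_14 (k₂ k₃ : ℝ) (hk₂ : k₂ ≠ 0) (hk₃ : k₃ ≠ 0)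
    (g : ℝ × ℝ × ℝ → ℝ) (hg : ContDiffAt ℝ (⊤ : ℕ∞) g 0)
    (wx wz wy b : ℝ → ℝ)
    (hsys₁ : ∀ᶠ L in 𝓝[>] (0 : ℝ),
      curveAvg k₂ k₃ L (fun p => p.1 ^ 2) * wx L
          + curveAvg k₂ k₃ L (fun p => p.1 * p.2.2) * wz L
        = curveAvg k₂ k₃ L (fun p => g p * p.1) ∧
      curveAvg k₂ k₃ L (fun p => p.1 * p.2.2) * wx L
          + curveAvg k₂ k₃ L (fun p => p.2.2 ^ 2) * wz L
        = curveAvg k₂ k₃ L (fun p => g p * p.2.2))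
    (hsys₂ : ∀ᶠ L in 𝓝[>] (0 : ℝ),
      curveAvg k₂ k₃ L (fun p => p.2.1 ^ 2) * wy L
          + curveAvg k₂ k₃ L (fun p => p.2.1) * b L
        = curveAvg k₂ k₃ L (fun p => g p * p.2.1) ∧
      curveAvg k₂ k₃ L (fun p => p.2.1) * wy L + b L
        = curveAvg k₂ k₃ L (fun p => g p)) :
    ((fun L : ℝ => wx L - fderiv ℝ g 0 ((1 : ℝ), (0 : ℝ), (0 : ℝ)))
        =O[𝓝[>] (0 : ℝ)] fun L => L ^ 4) ∧
    ((fun L : ℝ => b L - g 0) =O[𝓝[>] (0 : ℝ)] fun L => L ^ 4) := by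
  have hdiff : DifferentiableAt ℝ g 0 := hg.differentiableAt (by simp)
  set u : ℝ → ℝ × ℝ × ℝ := fun x => (x, k₂ * x ^ 2, k₃ * x ^ 3) with hu
  set h : ℝ → ℝ := fun x => g (x, k₂ * x ^ 2, k₃ * x ^ 3) with hh
  have hu0 : u 0 = 0 := by simp [hu, Prod.ext_iff]
  have hu5 : ContDiff ℝ ((5:ℕ) : WithTop ℕ∞) u := by
    apply ContDiff.prodMk contDiff_id
    apply ContDiff.prodMk
    · exact contDiff_const.mul (contDiff_id.pow 2)
    · exact contDiff_const.mul (contDiff_id.pow 3)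
  have hgat : ContDiffAt ℝ ((5:ℕ) : WithTop ℕ∞) g (u 0) := by
    rw [hu0]; exact hg.of_le (WithTop.coe_le_coe.2 le_top)
  have hh5 : ContDiffAt ℝ ((5:ℕ) : WithTop ℕ∞) h 0 := hgat.comp 0 hu5.contDiffAt
  obtain ⟨s, hsmem, hsOn⟩ := hh5.contDiffOn le_rfl (by simp)
  obtain ⟨ε, hε, hball⟩ := Metric.mem_nhds_iff.1 hsmem
  have hIoo : Ioo (-ε) ε ⊆ s := by
    intro x hx
    apply hball
    rw [Real.ball_eq_Ioo]
    constructor <;> [simpa using hx.1; simpa using hx.2]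
  have h5' : ContDiffOn ℝ ((4+1:ℕ) : WithTop ℕ∞) h (Ioo (-ε) ε) := hsOn.mono hIoo
  have hδ2 : (0:ℝ) < ε/2 := by positivity
  obtain ⟨a, C, hC, hbnd⟩ := stmt14_taylor (ε/2) ε hδ2 (by linarith) 4 h h5'
  have hbnd' : ∀ x ∈ Icc (-(ε/2)) (ε/2),
      |h x - (a 0 + a 1*x + a 2*x^2 + a 3*x^3 + a 4*x^4)| ≤ C*|x|^5 := by
    intro x hx
    have h1 := hbnd x hx
    have h2 : ∑ i ∈ Finset.range (4+1), a i * x^i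
        = a 0 + a 1*x + a 2*x^2 + a 3*x^3 + a 4*x^4 := by
      simp [Finset.sum_range_succ]
    rw [h2] at h1
    exact h1
  have hcont : ContinuousOn h (Icc (-(ε/2)) (ε/2)) := by
    apply hsOn.continuousOn.mono
    intro x hx
    simp only [mem_Icc] at hx
    exact hIoo ⟨by linarith [hx.1], by linarith [hx.2]⟩
  obtain ⟨hd00, hd01⟩ := stmt14_deriv h (a 0) (a 1) (a 2) (a 3) (a 4) C (ε/2) hδ2 hC.le hbnd'
  have hucurve : HasDerivAt u ((1:ℝ), (0:ℝ), (0:ℝ)) 0 := by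
    have h2 : HasDerivAt (fun x : ℝ => k₂ * x^2) 0 0 := by
      simpa using ((hasDerivAt_pow 2 (0:ℝ)).const_mul k₂)
    have h3 : HasDerivAt (fun x : ℝ => k₃ * x^3) 0 0 := by
      simpa using ((hasDerivAt_pow 3 (0:ℝ)).const_mul k₃)
    exact (hasDerivAt_id (0:ℝ)).prodMk (h2.prodMk h3)
  have hcomp : HasDerivAt h (fderiv ℝ g 0 ((1:ℝ), (0:ℝ), (0:ℝ))) 0 := by
    have hF : HasFDerivAt g (fderiv ℝ g 0) (u 0) := by rw [hu0]; exact hdiff.hasFDerivAt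
    exact hF.comp_hasDerivAt 0 hucurve
  have ha1 : a 1 = fderiv ℝ g 0 ((1:ℝ), (0:ℝ), (0:ℝ)) := hd01.unique hcomp
  have ha0 : a 0 = g 0 := by
    rw [← hd00]
    show g (u 0) = g 0
    rw [hu0]
  have hmain : ∀ᶠ L in 𝓝[>] (0:ℝ),
      |wx L - a 1| ≤ (45*C) * L^4 ∧ |b L - a 0| ≤ (|a 4| + 6*C) * L^4 := by
    have hmem : Set.Ioc (0:ℝ) (min (ε/2) 1) ∈ 𝓝[>] (0:ℝ) :=
      Ioc_mem_nhdsGT (by positivity)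
    filter_upwards [hsys₁, hsys₂, hmem] with L hs1 hs2 hLm
    obtain ⟨hL, hLle⟩ := hLm
    have hLδ : L ≤ ε/2 := le_trans hLle (min_le_left _ _)
    have hL1 : L ≤ 1 := le_trans hLle (min_le_right _ _)
    have hLne : L ≠ 0 := hL.ne'
    obtain ⟨R0, hI0, hR0⟩ :=
      stmt14_intsplit h (a 0) (a 1) (a 2) (a 3) (a 4) C (ε/2) hC.le hcont hbnd' hL hLδ 0
    obtain ⟨R1, hI1, hR1⟩ :=
      stmt14_intsplit h (a 0) (a 1) (a 2) (a 3) (a 4) C (ε/2) hC.le hcont hbnd' hL hLδ 1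
    obtain ⟨R2, hI2, hR2⟩ :=
      stmt14_intsplit h (a 0) (a 1) (a 2) (a 3) (a 4) C (ε/2) hC.le hcont hbnd' hL hLδ 2
    obtain ⟨R3, hI3, hR3⟩ :=
      stmt14_intsplit h (a 0) (a 1) (a 2) (a 3) (a 4) C (ε/2) hC.le hcont hbnd' hL hLδ 3
    have hA : curveAvg k₂ k₃ L (fun p => p.1 ^ 2) = L^2/3 := by
      simp only [curveAvg]
      rw [integral_pow]
      field_simp
      ring
    have hB : curveAvg k₂ k₃ L (fun p => p.1 * p.2.2) = k₃*L^4/5 := by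
      simp only [curveAvg]
      rw [show (∫ x in (-L)..L, x * (k₃ * x^3)) = ∫ x in (-L)..L, k₃ * x^4 from
        intervalIntegral.integral_congr fun x _ => by ring]
      rw [intervalIntegral.integral_const_mul, integral_pow]
      field_simp
      ring
    have hD : curveAvg k₂ k₃ L (fun p => p.2.2 ^ 2) = k₃^2*L^6/7 := by
      simp only [curveAvg]
      rw [show (∫ x in (-L)..L, (k₃ * x^3)^2) = ∫ x in (-L)..L, k₃^2 * x^6 from
        intervalIntegral.integral_congr fun x _ => by ring]
      rw [intervalIntegral.integral_const_mul, integral_pow]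
      field_simp
      ring
    have hA2 : curveAvg k₂ k₃ L (fun p => p.2.1 ^ 2) = k₂^2*L^4/5 := by
      simp only [curveAvg]
      rw [show (∫ x in (-L)..L, (k₂ * x^2)^2) = ∫ x in (-L)..L, k₂^2 * x^4 from
        intervalIntegral.integral_congr fun x _ => by ring]
      rw [intervalIntegral.integral_const_mul, integral_pow]
      field_simp
      ring
    have hB2 : curveAvg k₂ k₃ L (fun p => p.2.1) = k₂*L^2/3 := by
      simp only [curveAvg]
      rw [intervalIntegral.integral_const_mul, integral_pow]
      field_simp
      ring
    have hU0 : curveAvg k₂ k₃ L (fun p => g p)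
        = a 0 + a 2*L^2/3 + a 4*L^4/5 + R0/(2*L) := by
      simp only [curveAvg]
      rw [show (∫ x in (-L)..L, g (x, k₂ * x ^ 2, k₃ * x ^ 3))
          = ∫ x in (-L)..L, h x * x^(0:ℕ) from
        intervalIntegral.integral_congr fun x _ => by simp [hh]]
      rw [hI0]
      push_cast
      field_simp
      ring
    have hU1 : curveAvg k₂ k₃ L (fun p => g p * p.1)
        = a 1*L^2/3 + a 3*L^4/5 + R1/(2*L) := by
      simp only [curveAvg]
      rw [show (∫ x in (-L)..L, g (x, k₂ * x ^ 2, k₃ * x ^ 3) * x)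
          = ∫ x in (-L)..L, h x * x^(1:ℕ) from
        intervalIntegral.integral_congr fun x _ => by simp [hh]]
      rw [hI1]
      push_cast
      field_simp
      ring
    have hU2 : curveAvg k₂ k₃ L (fun p => g p * p.2.1)
        = k₂*(a 0*L^2/3 + a 2*L^4/5 + a 4*L^6/7 + R2/(2*L)) := by
      simp only [curveAvg]
      rw [show (∫ x in (-L)..L, g (x, k₂ * x ^ 2, k₃ * x ^ 3) * (k₂ * x^2))
          = ∫ x in (-L)..L, k₂ * (h x * x^(2:ℕ)) from
        intervalIntegral.integral_congr fun x _ => by simp [hh]; ring]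
      rw [intervalIntegral.integral_const_mul, hI2]
      push_cast
      field_simp
      ring
    have hU3 : curveAvg k₂ k₃ L (fun p => g p * p.2.2)
        = k₃*(a 1*L^4/5 + a 3*L^6/7 + R3/(2*L)) := by
      simp only [curveAvg]
      rw [show (∫ x in (-L)..L, g (x, k₂ * x ^ 2, k₃ * x ^ 3) * (k₃ * x^3))
          = ∫ x in (-L)..L, k₃ * (h x * x^(3:ℕ)) from
        intervalIntegral.integral_congr fun x _ => by simp [hh]; ring]
      rw [intervalIntegral.integral_const_mul, hI3]
      push_cast
      field_simp
      ring
    obtain ⟨e11, e12⟩ := hs1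
    obtain ⟨e21, e22⟩ := hs2
    rw [hA, hB, hU1] at e11
    rw [hB, hD, hU3] at e12
    rw [hA2, hB2, hU2] at e21
    rw [hB2, hU0] at e22
    have h2L : (0:ℝ) < 2*L := by linarith
    have hEbound : ∀ (R : ℝ) (m : ℕ), |R| ≤ 2*C*L^(m+6) → |R/(2*L)| ≤ C*L^(m+5) := by
      intro R m hR
      rw [abs_div, abs_of_pos h2L, div_le_iff₀ h2L]
      calc |R| ≤ 2*C*L^(m+6) := hR
        _ = C*L^(m+5)*(2*L) := by ring
    have hE0 : |R0/(2*L)| ≤ C*L^5 := hEbound R0 0 hR0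
    have hE1 : |R1/(2*L)| ≤ C*L^6 := hEbound R1 1 hR1
    have hE2 : |R2/(2*L)| ≤ C*L^7 := hEbound R2 2 hR2
    have hE3 : |R3/(2*L)| ≤ C*L^8 := hEbound R3 3 hR3
    constructor
    · exact stmt14_wxbound k₃ L C (a 1) (a 3) (R1/(2*L)) (R3/(2*L)) (wx L) (wz L)
        hk₃ hL hC e11 e12 hE1 hE3
    · exact stmt14_bbound k₂ L C (a 0) (a 2) (a 4) (R0/(2*L)) (R2/(2*L)) (wy L) (b L)
        hk₂ hL hL1 hC e21 e22 hE0 hE2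
  constructor
  · rw [← ha1]
    refine Asymptotics.IsBigO.of_bound (45*C) ?_
    filter_upwards [hmain, self_mem_nhdsWithin] with L hm hLpos
    rw [Real.norm_eq_abs, Real.norm_eq_abs, abs_of_pos (pow_pos (mem_Ioi.1 hLpos) 4)]
    exact hm.1
  · rw [← ha0]
    refine Asymptotics.IsBigO.of_bound (|a 4| + 6*C) ?_
    filter_upwards [hmain, self_mem_nhdsWithin] with L hm hLpos
    rw [Real.norm_eq_abs, Real.norm_eq_abs, abs_of_pos (pow_pos (mem_Ioi.1 hLpos) 4)]
    exact hm.2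
end
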